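/- arXiv:2412.11571 — 2 statements merged into one kernel-verified Lean document; each statement's English description precedes it below -/
import Mathlib

section
/- (Lovász Local Lemma, variable version, possibly infinite constraint set.) Let Π = (V, Λ, C, dom, Bad) be a CSP and let P be a probability measure on Λ making (Λ, P) a standard probability space. If there exist p ∈ [0,1) and d ∈ ℕ such that: Bad(c) is P^{dom(c)}-measurable and P[Bad(c)] ≤ p for all c ∈ C; the maximum degree of the dependency graph D_Π is at most d; and e·p·(d+1) < 1; then Π has a solution f : V → Λ. -/
open MeasureTheory Set
open scoped ENNReal

/-- A constraint satisfaction problem (CSP): variables `V`, labels `Λ`, constraints `C`.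
`dom c` is the finite set of variables of the constraint `c`, and `Bad c` is the set of
bad labelings `φ : dom c → Λ`. -/
structure CSP (V : Type*) (Λ : Type*) (C : Type*) where
  dom : C → Set V
  dom_finite : ∀ c, (dom c).Finite
  Bad : (c : C) → Set (↥(dom c) → Λ)

namespace CSP

variable {V Λ C : Type*}

/-- A labeling `f : V → Λ` violates the constraint `c` if its restriction to `dom c`
is a bad labeling. -/
def violates (Φ : CSP V Λ C) (f : V → Λ) (c : C) : Prop :=
  (fun v : ↥(Φ.dom c) => f v) ∈ Φ.Bad c

/-- A solution of a CSP: a labeling satisfying every constraint. -/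
def IsSolution (Φ : CSP V Λ C) (f : V → Λ) : Prop := ∀ c, ¬ Φ.violates f c

/-- The dependency graph of a CSP: distinct constraints are adjacent iff their domains meet. -/
def depGraph (Φ : CSP V Λ C) : SimpleGraph C where
  Adj c c' := c ≠ c' ∧ (Φ.dom c ∩ Φ.dom c').Nonempty
  symm := by
    constructor
    intro c c' h
    exact ⟨h.1.symm, by rw [Set.inter_comm]; exact h.2⟩
  loopless := ⟨fun c h => h.1 rfl⟩

/-- `P[Bad(c)]`: the probability of the set of bad labelings of `c` with respect to the
product measure `P^{dom c}`. -/
noncomputable def badProb [MeasurableSpace Λ] (Φ : CSP V Λ C) (P : Measure Λ) (c : C) : ℝ≥0∞ :=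
  haveI := (Φ.dom_finite c).fintype
  Measure.pi (fun _ : ↥(Φ.dom c) => P) (Φ.Bad c)

end CSP

/-- The ball of radius `R` around `c`: vertices joined to `c` by a path of at most `R` edges. -/
def gball {C : Type*} (G : SimpleGraph C) (c : C) : ℕ → Set C
  | 0 => {c}
  | R + 1 => gball G c R ∪ ⋃ x ∈ gball G c R, G.neighborSet x

lemma gball_finite {C : Type*} (G : SimpleGraph C)
    (hlf : ∀ v, (G.neighborSet v).Finite) (c : C) : ∀ R, (gball G c R).Finite
  | 0 => Set.finite_singleton c
  | (R + 1) => ((gball_finite G hlf c R).union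
      ((gball_finite G hlf c R).biUnion (fun x _ => hlf x)))

/-- The growth function `γ_G(R) = sup_v |B_G(v,R)|`, valued in `ℕ∞`. -/
noncomputable def growth {C : Type*} (G : SimpleGraph C) (R : ℕ) : ℕ∞ :=
  ⨆ v, (gball G v R).encard

/-- The exponential growth rate `egr(G) = inf_{R ≥ 1} γ_G(R)^{1/R}`, valued in `ℝ≥0∞`. -/
noncomputable def egr {C : Type*} (G : SimpleGraph C) : ℝ≥0∞ :=
  ⨅ R : {n : ℕ // 1 ≤ n}, ((growth G R.1 : ℝ≥0∞) ^ ((R.1 : ℝ)⁻¹))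

/-- The closed neighborhood `N[c]` of a vertex in a graph. -/
def closedNbhd {C : Type*} (G : SimpleGraph C) (c : C) : Set C :=
  insert c (G.neighborSet c)

/-- A set of vertices is independent if no two of its members are adjacent. -/
def IsIndep {C : Type*} (G : SimpleGraph C) (s : Set C) : Prop :=
  ∀ c ∈ s, ∀ c' ∈ s, ¬ G.Adj c c'

section BorelCSP

variable {V Λ C : Type*}

/-- The finite set obtained as the image of a tuple. -/
noncomputable def finsetOfTuple {X : Type*} (n : ℕ) (t : Fin n → X) : Finset X :=
  haveI := Classical.decEq X
  Finset.image t Finset.univ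

/-- The standard Borel structure on the space of finite subsets of `X`: a set of finite sets is
measurable iff for each `n` its preimage under the map `(x_1, …, x_n) ↦ {x_1, …, x_n}` is
measurable. -/
noncomputable def finsetMS (X : Type*) [MeasurableSpace X] : MeasurableSpace (Finset X) :=
  ⨅ n : ℕ, MeasurableSpace.map (finsetOfTuple (X := X) n) MeasurableSpace.pi

/-- The graph of a labeling `φ : dom c → Λ`, as a finite subset of `V × Λ`; this encodes a finite
partial function `V ⇀ Λ`. -/
noncomputable def CSP.graphOf (Φ : CSP V Λ C) (c : C) (φ : ↥(Φ.dom c) → Λ) :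
    Finset (V × Λ) :=
  haveI := Classical.decEq (V × Λ)
  (Φ.dom_finite c).toFinset.attach.image
    (fun v => (v.1, φ ⟨v.1, (Φ.dom_finite c).mem_toFinset.mp v.2⟩))

/-- A CSP on standard Borel spaces is Borel if `dom` is a Borel map into the space of finite
subsets of `V` and `{(c, φ) : φ ∈ Bad c}` is Borel in `C × (finite partial functions V ⇀ Λ)`,
finite partial functions being encoded by their graphs. -/
structure IsBorelCSP [MeasurableSpace V] [MeasurableSpace Λ] [MeasurableSpace C]
    (Φ : CSP V Λ C) : Prop where
  dom_meas : Measurable[_, finsetMS V] (fun c => (Φ.dom_finite c).toFinset)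
  bad_meas : MeasurableSet[(inferInstance : MeasurableSpace C).prod (finsetMS (V × Λ))]
    {p : C × Finset (V × Λ) | ∃ φ ∈ Φ.Bad p.1, p.2 = Φ.graphOf p.1 φ}

end BorelCSP

section MT

variable {V Λ C : Type*}

open scoped Classical

/-- The level function of the Moser–Tardos algorithm run with the sequence `I` of chosen
independent sets: `lev_0(v) = 0` and `lev_{n+1}(v) = lev_n(v) + 1` exactly when `v` belongs to the
domain of some constraint in `I n`. -/
noncomputable def MTlev (Φ : CSP V Λ C) (I : ℕ → Set C) : ℕ → V → ℕ
  | 0, _ => 0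
  | n + 1, v => MTlev Φ I n v + (if ∃ c ∈ I n, v ∈ Φ.dom c then 1 else 0)

/-- The labeling used at step `n` of the Moser–Tardos algorithm with table `t`. -/
noncomputable def CSP.MTstep (Φ : CSP V Λ C) (t : V → ℕ → Λ) (I : ℕ → Set C)
    (n : ℕ) : V → Λ :=
  fun v => t v (MTlev Φ I n v)

/-- An MT-sequence `I` is consistent with `(Φ, t)` if it can be produced by the Moser–Tardos
algorithm on input `(Φ, t)`: each `I n` is an independent set of constraints violated by the
current labeling. -/
noncomputable def CSP.Consistent (Φ : CSP V Λ C) (t : V → ℕ → Λ) (I : ℕ → Set C) : Prop :=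
  (∀ n, IsIndep Φ.depGraph (I n)) ∧ ∀ n, ∀ c ∈ I n, Φ.violates (Φ.MTstep t I n) c

/-- An MT-sequence consistent with `(Φ, t)` that can be produced by the *maximal* Moser–Tardos
algorithm: each `I n` is a maximal independent subset of the set of violated constraints. -/
noncomputable def CSP.MaximalCons (Φ : CSP V Λ C) (t : V → ℕ → Λ) (I : ℕ → Set C) : Prop :=
  Φ.Consistent t I ∧
    ∀ n, ∀ c, Φ.violates (Φ.MTstep t I n) c → c ∉ I n → ∃ c' ∈ I n, Φ.depGraph.Adj c c'

/-- The levels at `v` stabilize, i.e. `lev(v) = lim_n lev_n(v) < ∞`: the output labeling of the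
run of the Moser–Tardos algorithm is defined at `v`. -/
def StabilizesAt (Φ : CSP V Λ C) (I : ℕ → Set C) (v : V) : Prop :=
  ∃ N, ∀ n, N ≤ n → MTlev Φ I n v = MTlev Φ I N v

/-- A table is good if every run of the Moser–Tardos algorithm on `(Φ, t)` produces a labeling
defined on all of `V`. -/
def CSP.GoodTable (Φ : CSP V Λ C) (t : V → ℕ → Λ) : Prop :=
  ∀ I : ℕ → Set C, Φ.Consistent t I → ∀ v, StabilizesAt Φ I v

/-- The `(c, r)`-local CSP `Π_{c,r}`: constraints at distance more than `r` from `c` in the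
dependency graph are always violated. -/
noncomputable def CSP.localCSP (Φ : CSP V Λ C) (c : C) (r : ℕ) : CSP V Λ C where
  dom := Φ.dom
  dom_finite := Φ.dom_finite
  Bad a := if a ∈ gball Φ.depGraph c r then Φ.Bad a else Set.univ

/-- A finite MT-sequence: `Σ_n |I_n| < ∞`. -/
def FiniteMTSeq {C : Type*} (I : ℕ → Set C) : Prop :=
  {q : C × ℕ | q.1 ∈ I q.2}.Finite

/-- A finite MT-sequence is `(c, r, N, ε)`-Følner if `Σ_n |I_n ∩ B_D(c,r)| ≥ N` and
`Σ_n |I_n \ B_D(c,r)| < ε · Σ_n |I_n|`. -/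
def CSP.Folner (Φ : CSP V Λ C) (I : ℕ → Set C) (c : C) (r N : ℕ) (ε : ℝ) : Prop :=
  FiniteMTSeq I ∧
    N ≤ {q : C × ℕ | q.1 ∈ I q.2 ∧ q.1 ∈ gball Φ.depGraph c r}.ncard ∧
    ({q : C × ℕ | q.1 ∈ I q.2 ∧ q.1 ∉ gball Φ.depGraph c r}.ncard : ℝ) <
      ε * ({q : C × ℕ | q.1 ∈ I q.2}.ncard : ℝ)

/-- A table is `(c, R, N, ε)`-locally good if for all `r < R` there is no `(c, r, N, ε)`-Følner
MT-sequence consistent with `(Φ_{c,r}, t)`. -/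
noncomputable def CSP.LocallyGoodAt (Φ : CSP V Λ C) (t : V → ℕ → Λ) (c : C) (R N : ℕ)
    (ε : ℝ) : Prop :=
  ∀ r < R, ¬ ∃ I : ℕ → Set C, (Φ.localCSP c r).Consistent t I ∧ Φ.Folner I c r N ε

/-- A table is `(R, N, ε)`-locally good if it is `(c, R, N, ε)`-locally good for every `c`. -/
noncomputable def CSP.LocallyGood (Φ : CSP V Λ C) (t : V → ℕ → Λ) (R N : ℕ) (ε : ℝ) : Prop :=
  ∀ c, Φ.LocallyGoodAt t c R N ε

/-- `dom_R(c) = ⋃_{a ∈ B_D(c,R)} dom(a)`. -/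
def CSP.domR (Φ : CSP V Λ C) (c : C) (R : ℕ) : Set V :=
  ⋃ a ∈ gball Φ.depGraph c R, Φ.dom a

lemma CSP.domR_finite (Φ : CSP V Λ C) (hlf : ∀ c, (Φ.depGraph.neighborSet c).Finite)
    (c : C) (R : ℕ) : (Φ.domR c R).Finite :=
  (gball_finite _ hlf c R).biUnion (fun a _ => Φ.dom_finite a)

/-- The set `LBad_{R,N,ε}(c)` of partial tables `φ : dom_R(c) → Λ^ℕ` such that some
(equivalently, every) table extending `φ` is not `(c, R, N, ε)`-locally good. -/
noncomputable def CSP.LBad (Φ : CSP V Λ C) (c : C) (R N : ℕ) (ε : ℝ) :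
    Set (↥(Φ.domR c R) → ℕ → Λ) :=
  {φ | ∃ t : V → ℕ → Λ, (∀ v : ↥(Φ.domR c R), t v = φ v) ∧
    ¬ Φ.LocallyGoodAt t c R N ε}

/-- The CSP `LG(R, N, ε)` whose solutions are exactly the `(R, N, ε)`-locally good tables. -/
noncomputable def CSP.LG (Φ : CSP V Λ C) (R N : ℕ) (ε : ℝ)
    (h : ∀ c, (Φ.domR c R).Finite) : CSP V (ℕ → Λ) C where
  dom c := Φ.domR c R
  dom_finite := h
  Bad c := Φ.LBad c R N ε

end MT

/-- `Q` is the product of copies of `P` over the index set `ι`: the measure of every measurable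
cylinder is the corresponding finite product. -/
def IsProductOf {ι Λ : Type*} [MeasurableSpace Λ] (Q : Measure (ι → Λ)) (P : Measure Λ) : Prop :=
  ∀ (s : Finset ι) (A : ι → Set Λ), (∀ i ∈ s, MeasurableSet (A i)) →
    Q {g | ∀ i ∈ s, g i ∈ A i} = ∏ i ∈ s, P (A i)



section LLLAux

open MeasureTheory Set

section AbstractLLL

variable {Ω : Type*} [MeasurableSpace Ω] (μ : Measure Ω) [IsProbabilityMeasure μ]
  {C : Type*} (A : C → Set Ω)

/-- step identity -/
lemma lll_step [DecidableEq C] (hA : ∀ c, MeasurableSet (A c)) (S : Finset C) (j : C) (hj : j ∉ S) :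
    (μ (⋂ i ∈ insert j S, (A i)ᶜ)).toReal
      = (μ (⋂ i ∈ S, (A i)ᶜ)).toReal - (μ (A j ∩ ⋂ i ∈ S, (A i)ᶜ)).toReal := by
  classical
  set t := ⋂ i ∈ S, (A i)ᶜ with ht
  have h1 : (⋂ i ∈ insert j S, (A i)ᶜ) = t \ A j := by
    rw [Finset.set_biInter_insert]
    rw [Set.diff_eq, Set.inter_comm]
  have h2 : μ (t ∩ A j) + μ (t \ A j) = μ t := measure_inter_add_diff t (hA j)
  have hfin1 : μ (t ∩ A j) ≠ ⊤ := measure_ne_top μ _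
  have hfin2 : μ (t \ A j) ≠ ⊤ := measure_ne_top μ _
  have h3 : (μ (t ∩ A j)).toReal + (μ (t \ A j)).toReal = (μ t).toReal := by
    rw [← ENNReal.toReal_add hfin1 hfin2, h2]
  rw [h1, Set.inter_comm (A j) t]
  linarith

theorem lll_main (hA : ∀ c, MeasurableSet (A c))
    (G : SimpleGraph C) (x : ℝ) (hx0 : 0 < x) (hx1 : x < 1) (d : ℕ)
    (hdeg : ∀ c, (G.neighborSet c).encard ≤ d)
    (hp : ∀ c, (μ (A c)).toReal ≤ x * (1 - x) ^ d)
    (hind : ∀ c (T : Finset C), (∀ j ∈ T, j ≠ c ∧ ¬ G.Adj c j) →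
      μ (A c ∩ ⋂ j ∈ T, (A j)ᶜ) = μ (A c) * μ (⋂ j ∈ T, (A j)ᶜ)) :
    ∀ S : Finset C, 0 < (μ (⋂ j ∈ S, (A j)ᶜ)).toReal := by
  classical
  have hx1' : (0:ℝ) < 1 - x := by linarith
  have hx1'' : 1 - x ≤ 1 := by linarith
  -- main claim, by strong induction
  have main : ∀ n : ℕ, ∀ S : Finset C, S.card ≤ n → ∀ c,
      (μ (A c ∩ ⋂ j ∈ S, (A j)ᶜ)).toReal ≤ x * (μ (⋂ j ∈ S, (A j)ᶜ)).toReal := by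
    intro n
    induction n with
    | zero =>
      intro S hS c
      have hSe : S = ∅ := Finset.card_eq_zero.mp (Nat.le_zero.mp hS)
      subst hSe
      simp only [Finset.notMem_empty, Set.iInter_of_empty, Set.iInter_univ, Set.inter_univ]
      calc (μ (A c)).toReal ≤ x * (1 - x) ^ d := hp c
        _ ≤ x * 1 := by
            have : (1 - x) ^ d ≤ 1 := pow_le_one₀ (le_of_lt hx1') hx1''
            nlinarith
        _ = x * (μ (Set.univ : Set Ω)).toReal := by simp
    | succ n ih =>
      intro S hS c
      by_cases hc : c ∈ S
      · have hsub : A c ∩ ⋂ j ∈ S, (A j)ᶜ ⊆ (∅ : Set Ω) := by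
          intro y hy
          have h1 : y ∈ A c := hy.1
          have h2 : y ∈ (A c)ᶜ := by
            have := hy.2
            simp only [Set.mem_iInter] at this
            exact this c hc
          exact (h2 h1).elim
        have : μ (A c ∩ ⋂ j ∈ S, (A j)ᶜ) = 0 := measure_mono_null hsub measure_empty
        rw [this]
        simp only [ENNReal.toReal_zero]
        positivity
      · set S₁ := S.filter (fun j => G.Adj c j) with hS₁
        set S₂ := S \ S₁ with hS₂
        have hS₂sub : S₂ ⊆ S := Finset.sdiff_subset
        have hunion : S₂ ∪ S₁ = S := by
          rw [hS₂]
          exact Finset.sdiff_union_of_subset (Finset.filter_subset _ _)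
        -- independence
        have key1 : μ (A c ∩ ⋂ j ∈ S₂, (A j)ᶜ) = μ (A c) * μ (⋂ j ∈ S₂, (A j)ᶜ) := by
          apply hind
          intro j hj
          have hjS : j ∈ S := hS₂sub hj
          have hjne : j ≠ c := fun h => hc (h ▸ hjS)
          have hnadj : ¬ G.Adj c j := by
            intro hadj
            have : j ∈ S₁ := Finset.mem_filter.mpr ⟨hjS, hadj⟩
            rw [hS₂] at hj
            exact (Finset.mem_sdiff.mp hj).2 this
          exact ⟨hjne, hnadj⟩
        -- S₁.card ≤ d
        have hcard1 : S₁.card ≤ d := by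
          have h1 : (↑S₁ : Set C) ⊆ G.neighborSet c := by
            intro j hj
            simp only [Finset.coe_filter, Set.mem_setOf_eq, hS₁] at hj
            exact hj.2
          have h2 : (↑S₁ : Set C).encard ≤ (d : ℕ∞) := le_trans (Set.encard_mono h1) (hdeg c)
          rwa [Set.encard_coe_eq_coe_finsetCard, Nat.cast_le] at h2
        -- lower bound via induction over T ⊆ S₁
        have key2 : ∀ T : Finset C, T ⊆ S₁ →
            (1 - x) ^ T.card * (μ (⋂ j ∈ S₂, (A j)ᶜ)).toReal
              ≤ (μ (⋂ j ∈ S₂ ∪ T, (A j)ᶜ)).toReal := by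
          intro T
          induction T using Finset.induction_on with
          | empty => simp
          | @insert j T hjT ihT =>
            intro hins
            have hTsub : T ⊆ S₁ := fun a ha => hins (Finset.mem_insert_of_mem ha)
            have hjS₁ : j ∈ S₁ := hins (Finset.mem_insert_self j T)
            have hjS : j ∈ S := Finset.filter_subset _ _ hjS₁
            have hjnot : j ∉ S₂ ∪ T := by
              intro hj
              rcases Finset.mem_union.mp hj with h | h
              · rw [hS₂] at h; exact (Finset.mem_sdiff.mp h).2 hjS₁
              · exact hjT h
            have hcardle : (S₂ ∪ T).card ≤ n := by
              have hsub : S₂ ∪ T ⊆ S.erase j := by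
                intro a ha
                refine Finset.mem_erase.mpr ⟨?_, ?_⟩
                · intro h; exact hjnot (h ▸ ha)
                · rcases Finset.mem_union.mp ha with h | h
                  · exact hS₂sub h
                  · exact Finset.filter_subset _ _ (hTsub h)
              calc (S₂ ∪ T).card ≤ (S.erase j).card := Finset.card_le_card hsub
                _ = S.card - 1 := Finset.card_erase_of_mem hjS
                _ ≤ n := by omega
            have hmain := ih (S₂ ∪ T) hcardle j
            have hstep := lll_step μ A hA (S₂ ∪ T) j hjnot
            have hrw : S₂ ∪ insert j T = insert j (S₂ ∪ T) := Finset.union_insert j S₂ T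
            rw [hrw, hstep]
            have hQT := ihT hTsub
            have hQnonneg : (0:ℝ) ≤ (μ (⋂ j ∈ S₂ ∪ T, (A j)ᶜ)).toReal := ENNReal.toReal_nonneg
            have : (1 - x) ^ (insert j T).card * (μ (⋂ j ∈ S₂, (A j)ᶜ)).toReal
                ≤ (1 - x) * (μ (⋂ j ∈ S₂ ∪ T, (A j)ᶜ)).toReal := by
              rw [Finset.card_insert_of_notMem hjT, pow_succ]
              calc (1 - x) ^ T.card * (1 - x) * (μ (⋂ j ∈ S₂, (A j)ᶜ)).toReal
                  = (1 - x) * ((1 - x) ^ T.card * (μ (⋂ j ∈ S₂, (A j)ᶜ)).toReal) := by ring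
                _ ≤ (1 - x) * (μ (⋂ j ∈ S₂ ∪ T, (A j)ᶜ)).toReal := by
                    apply mul_le_mul_of_nonneg_left hQT (le_of_lt hx1')
            linarith
        -- put it together
        have hmono : (μ (A c ∩ ⋂ j ∈ S, (A j)ᶜ)).toReal
            ≤ (μ (A c ∩ ⋂ j ∈ S₂, (A j)ᶜ)).toReal := by
          apply ENNReal.toReal_mono (measure_ne_top μ _)
          apply measure_mono
          apply Set.inter_subset_inter_right
          apply Set.biInter_subset_biInter_left
          intro j hj
          exact hS₂sub hj
        have heq : (μ (A c ∩ ⋂ j ∈ S₂, (A j)ᶜ)).toReal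
            = (μ (A c)).toReal * (μ (⋂ j ∈ S₂, (A j)ᶜ)).toReal := by
          rw [key1, ENNReal.toReal_mul]
        have hQ2nonneg : (0:ℝ) ≤ (μ (⋂ j ∈ S₂, (A j)ᶜ)).toReal := ENNReal.toReal_nonneg
        have hb1 : (μ (A c)).toReal * (μ (⋂ j ∈ S₂, (A j)ᶜ)).toReal
            ≤ x * (1 - x) ^ d * (μ (⋂ j ∈ S₂, (A j)ᶜ)).toReal :=
          mul_le_mul_of_nonneg_right (hp c) hQ2nonneg
        have hb2 : (1 - x) ^ d ≤ (1 - x) ^ S₁.card :=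
          pow_le_pow_of_le_one (le_of_lt hx1') hx1'' hcard1
        have hb3 : x * (1 - x) ^ d * (μ (⋂ j ∈ S₂, (A j)ᶜ)).toReal
            ≤ x * ((1 - x) ^ S₁.card * (μ (⋂ j ∈ S₂, (A j)ᶜ)).toReal) := by
          have := mul_le_mul_of_nonneg_right hb2 hQ2nonneg
          nlinarith
        have hb4 := key2 S₁ (le_refl _)
        rw [hunion] at hb4
        calc (μ (A c ∩ ⋂ j ∈ S, (A j)ᶜ)).toReal
            ≤ (μ (A c)).toReal * (μ (⋂ j ∈ S₂, (A j)ᶜ)).toReal := heq ▸ hmono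
          _ ≤ x * (1 - x) ^ d * (μ (⋂ j ∈ S₂, (A j)ᶜ)).toReal := hb1
          _ ≤ x * ((1 - x) ^ S₁.card * (μ (⋂ j ∈ S₂, (A j)ᶜ)).toReal) := hb3
          _ ≤ x * (μ (⋂ j ∈ S, (A j)ᶜ)).toReal :=
              mul_le_mul_of_nonneg_left hb4 (le_of_lt hx0)
  -- conclusion
  have hlow : ∀ S' : Finset C, (1 - x) ^ S'.card ≤ (μ (⋂ j ∈ S', (A j)ᶜ)).toReal := by
    intro S'
    induction S' using Finset.induction_on with
    | empty => simp
    | @insert j T hjT ihT =>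
      rw [lll_step μ A hA T j hjT, Finset.card_insert_of_notMem hjT]
      have h1 := main T.card T (le_refl _) j
      have h2 : (1 - x) ^ (T.card + 1) ≤ (1 - x) * (μ (⋂ j ∈ T, (A j)ᶜ)).toReal := by
        rw [pow_succ]
        calc (1 - x) ^ T.card * (1 - x) = (1 - x) * (1 - x) ^ T.card := by ring
          _ ≤ (1 - x) * (μ (⋂ j ∈ T, (A j)ᶜ)).toReal :=
              mul_le_mul_of_nonneg_left ihT (le_of_lt hx1')
      linarith
  intro S
  calc (0:ℝ) < (1 - x) ^ S.card := pow_pos hx1' _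
    _ ≤ _ := hlow S

end AbstractLLL


open MeasureTheory Set

section PiIndep

variable {ι : Type*} [Fintype ι] {Λ : Type*} [MeasurableSpace Λ] [Nonempty Λ]
  (P : Measure Λ) [IsProbabilityMeasure P]

/-- `E` depends only on coordinates in `D`. -/
def SuppOn {ι Λ : Type*} (D : Set ι) (E : Set (ι → Λ)) : Prop :=
  ∀ f g : ι → Λ, (∀ i ∈ D, f i = g i) → f ∈ E → g ∈ E

lemma SuppOn.mono {ι Λ : Type*} {D D' : Set ι} {E : Set (ι → Λ)} (h : SuppOn D E)
    (hDD' : D ⊆ D') : SuppOn D' E :=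
  fun f g hfg hf => h f g (fun i hi => hfg i (hDD' hi)) hf

lemma SuppOn.compl {ι Λ : Type*} {D : Set ι} {E : Set (ι → Λ)} (h : SuppOn D E) :
    SuppOn D Eᶜ :=
  fun f g hfg hf hg => hf (h g f (fun i hi => (hfg i hi).symm) hg)

lemma SuppOn.biInter {ι Λ κ : Type*} {D : Set ι} {T : Finset κ} {E : κ → Set (ι → Λ)}
    (h : ∀ j ∈ T, SuppOn D (E j)) : SuppOn D (⋂ j ∈ T, E j) := by
  intro f g hfg hf
  simp only [Set.mem_iInter] at hf ⊢
  exact fun j hj => h j hj f g hfg (hf j hj)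

/-- Splitting lemma: preimage of a measurable set under restriction has the same measure. -/
lemma pi_restrict_preimage (p : ι → Prop) [DecidablePred p]
    (X : Set ((i : Subtype p) → Λ)) (hX : MeasurableSet X) :
    Measure.pi (fun _ : ι => P) ((fun f (i : Subtype p) => f i) ⁻¹' X)
      = Measure.pi (fun _ : Subtype p => P) X := by
  have hmp := measurePreserving_piEquivPiSubtypeProd (fun _ : ι => (P : Measure Λ)) p
  have hpre : (fun f (i : Subtype p) => f i) ⁻¹' X
      = (MeasurableEquiv.piEquivPiSubtypeProd (fun _ : ι => Λ) p) ⁻¹'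
        (X ×ˢ (Set.univ : Set ((i : {x // ¬ p x}) → Λ))) := by
    ext f
    simp [MeasurableEquiv.piEquivPiSubtypeProd, Equiv.piEquivPiSubtypeProd]
  rw [hpre, hmp.measure_preimage (hX.prod MeasurableSet.univ).nullMeasurableSet,
    Measure.prod_prod]
  simp

/-- Independence of events supported on disjoint coordinate sets, subtype version. -/
lemma pi_indep_subtype (p : ι → Prop) [DecidablePred p]
    (E F : Set (ι → Λ)) (hE : MeasurableSet E) (hF : MeasurableSet F)
    (hEs : SuppOn {i | p i} E) (hFs : SuppOn {i | ¬ p i} F) :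
    Measure.pi (fun _ : ι => P) (E ∩ F)
      = Measure.pi (fun _ : ι => P) E * Measure.pi (fun _ : ι => P) F := by
  classical
  set μ := Measure.pi (fun _ : ι => P)
  -- extension maps
  set extp : ((i : Subtype p) → Λ) → (ι → Λ) :=
    fun φ i => if h : p i then φ ⟨i, h⟩ else Classical.arbitrary Λ with hextp
  set extn : ((i : {x // ¬ p x}) → Λ) → (ι → Λ) :=
    fun φ i => if h : p i then Classical.arbitrary Λ else φ ⟨i, h⟩ with hextn
  have hextp_meas : Measurable extp := by
    apply measurable_pi_lambda
    intro i
    by_cases h : p i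
    · simpa [hextp, h] using (measurable_pi_apply (⟨i, h⟩ : Subtype p))
    · simpa [hextp, h] using measurable_const
  have hextn_meas : Measurable extn := by
    apply measurable_pi_lambda
    intro i
    by_cases h : p i
    · simpa [hextn, h] using measurable_const
    · simpa [hextn, h] using (measurable_pi_apply (⟨i, h⟩ : {x // ¬ p x}))
  set E' : Set ((i : Subtype p) → Λ) := extp ⁻¹' E with hE'
  set F' : Set ((i : {x // ¬ p x}) → Λ) := extn ⁻¹' F with hF'
  have hE'm : MeasurableSet E' := hextp_meas hE
  have hF'm : MeasurableSet F' := hextn_meas hF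
  have hEeq : E = (fun f (i : Subtype p) => f i) ⁻¹' E' := by
    ext f
    constructor
    · intro hf
      refine hEs f (extp (fun i : Subtype p => f i)) ?_ hf
      intro i hi
      simp only [Set.mem_setOf_eq] at hi
      simp [hextp, hi]
    · intro hf
      refine hEs (extp (fun i : Subtype p => f i)) f ?_ hf
      intro i hi
      simp only [Set.mem_setOf_eq] at hi
      simp [hextp, hi]
  have hFeq : F = (fun f (i : {x // ¬ p x}) => f i) ⁻¹' F' := by
    ext f
    constructor
    · intro hf
      refine hFs f (extn (fun i : {x // ¬ p x} => f i)) ?_ hf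
      intro i hi
      simp only [Set.mem_setOf_eq] at hi
      simp [hextn, hi]
    · intro hf
      refine hFs (extn (fun i : {x // ¬ p x} => f i)) f ?_ hf
      intro i hi
      simp only [Set.mem_setOf_eq] at hi
      simp [hextn, hi]
  have hmp := measurePreserving_piEquivPiSubtypeProd (fun _ : ι => (P : Measure Λ)) p
  have hEF : E ∩ F = (MeasurableEquiv.piEquivPiSubtypeProd (fun _ : ι => Λ) p) ⁻¹'
      (E' ×ˢ F') := by
    rw [hEeq, hFeq]
    ext f
    simp [MeasurableEquiv.piEquivPiSubtypeProd, Equiv.piEquivPiSubtypeProd]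
  have h1 : μ (E ∩ F) = Measure.pi (fun _ : Subtype p => P) E'
      * Measure.pi (fun _ : {x // ¬ p x} => P) F' := by
    rw [hEF, hmp.measure_preimage (hE'm.prod hF'm).nullMeasurableSet, Measure.prod_prod]
  have h2 : μ E = Measure.pi (fun _ : Subtype p => P) E' := by
    rw [hEeq]; exact pi_restrict_preimage P p E' hE'm
  have h3 : μ F = Measure.pi (fun _ : {x // ¬ p x} => P) F' := by
    rw [hFeq]
    -- same argument with ¬ p
    have hmp' := measurePreserving_piEquivPiSubtypeProd (fun _ : ι => (P : Measure Λ)) p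
    have hpre : (fun f (i : {x // ¬ p x}) => f i) ⁻¹' F'
        = (MeasurableEquiv.piEquivPiSubtypeProd (fun _ : ι => Λ) p) ⁻¹'
          ((Set.univ : Set ((i : Subtype p) → Λ)) ×ˢ F') := by
      ext f
      simp [MeasurableEquiv.piEquivPiSubtypeProd, Equiv.piEquivPiSubtypeProd]
    rw [hpre, hmp'.measure_preimage (MeasurableSet.univ.prod hF'm).nullMeasurableSet,
      Measure.prod_prod]
    simp
  rw [h1, h2, h3]

/-- Independence of events supported on disjoint sets of coordinates. -/
lemma pi_indep (s t : Set ι) (hst : Disjoint s t)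
    (E F : Set (ι → Λ)) (hE : MeasurableSet E) (hF : MeasurableSet F)
    (hEs : SuppOn s E) (hFs : SuppOn t F) :
    Measure.pi (fun _ : ι => P) (E ∩ F)
      = Measure.pi (fun _ : ι => P) E * Measure.pi (fun _ : ι => P) F := by
  classical
  refine pi_indep_subtype P (fun i => i ∈ s) E F hE hF ?_ ?_
  · exact hEs.mono (fun i hi => hi)
  · refine hFs.mono (fun i hi => ?_)
    simp only [Set.mem_setOf_eq]
    exact fun hs => Set.disjoint_left.mp hst hs hi

/-- Reindexing: the measure of a preimage under precomposition with an injection. -/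
lemma pi_comp_inj {κ : Type*} [Fintype κ] (g : κ → ι) (hg : Function.Injective g)
    (B : Set (κ → Λ)) (hB : MeasurableSet B) :
    Measure.pi (fun _ : ι => P) ((fun f => f ∘ g) ⁻¹' B)
      = Measure.pi (fun _ : κ => P) B := by
  classical
  set p : ι → Prop := fun i => i ∈ Set.range g with hp
  let e' : κ ≃ Subtype p := Equiv.ofInjective g hg
  set me := MeasurableEquiv.piCongrLeft (fun _ : Subtype p => Λ) e' with hme
  have hms : Measurable (⇑me.symm) := me.symm.measurable
  have hcomp : (fun f : ι → Λ => f ∘ g)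
      = (fun φ : (i : Subtype p) → Λ => me.symm φ) ∘ (fun f (i : Subtype p) => f i) := by
    funext f
    funext k
    have : me.symm (fun i : Subtype p => f i) k = (fun i : Subtype p => f i) (e' k) := by
      simp [hme, MeasurableEquiv.piCongrLeft, Equiv.piCongrLeft_symm_apply]
    simp only [Function.comp_apply, this]
    rfl
  have hpre : (fun f : ι → Λ => f ∘ g) ⁻¹' B
      = (fun f (i : Subtype p) => f i) ⁻¹' (me.symm ⁻¹' B) := by
    rw [hcomp]; rfl
  rw [hpre, pi_restrict_preimage P p (me.symm ⁻¹' B) (hms hB)]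
  have hmp : MeasurePreserving (⇑me.symm)
      (Measure.pi (fun _ : Subtype p => P)) (Measure.pi (fun _ : κ => P)) := by
    have h := measurePreserving_piCongrLeft (fun _ : Subtype p => (P : Measure Λ)) e'
    exact (MeasurePreserving.symm me h)
  have hfin := hmp.measure_preimage hB.nullMeasurableSet
  convert hfin using 2
  congr!

end PiIndep


open MeasureTheory Set Metric TopologicalSpace
open scoped ENNReal NNReal

/-- Tightness of finite measures on Polish spaces: whole-space version. -/
lemma exists_compact_large {α : Type*} [MeasurableSpace α] [TopologicalSpace α]
    [PolishSpace α] [BorelSpace α] (μ : Measure α) [IsFiniteMeasure μ]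
    {ε : ℝ≥0∞} (hε : ε ≠ 0) :
    ∃ K : Set α, IsCompact K ∧ μ Kᶜ ≤ ε := by
  rcases isEmpty_or_nonempty α with hα | hα
  · refine ⟨∅, isCompact_empty, ?_⟩
    have : (∅ : Set α)ᶜ = (∅ : Set α) := Set.eq_empty_of_isEmpty _
    rw [this]
    simp
  letI := upgradeIsCompletelyMetrizable α
  set u : ℕ → α := denseSeq α with hu
  have hdense : DenseRange u := denseRange_denseSeq α
  -- the approximating unions of balls
  set S : ℕ → ℕ → Set α := fun n m => ⋃ i ∈ Finset.range m, closedBall (u i) (1/(n+1) : ℝ)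
    with hS
  have hSclosed : ∀ n m, IsClosed (S n m) := by
    intro n m
    apply Set.Finite.isClosed_biUnion (Finset.finite_toSet _)
    intro i _
    exact isClosed_closedBall
  have hScover : ∀ n, ⋃ m, S n m = Set.univ := by
    intro n
    apply Set.eq_univ_of_forall
    intro y
    have hpos : (0:ℝ) < 1/(n+1) := by positivity
    obtain ⟨i, hi⟩ := hdense.exists_dist_lt y hpos
    refine Set.mem_iUnion.mpr ⟨i+1, ?_⟩
    refine Set.mem_biUnion (Finset.self_mem_range_succ i) ?_
    rw [mem_closedBall]
    exact le_of_lt hi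
  -- small epsilons
  obtain ⟨ε', hε'pos, hε'sum⟩ := ENNReal.exists_pos_sum_of_countable hε ℕ
  -- choose m n
  have hchoice : ∀ n : ℕ, ∃ m, μ (S n m)ᶜ < ε' n := by
    intro n
    have hanti : Antitone (fun m => (S n m)ᶜ) := by
      intro a b hab
      apply Set.compl_subset_compl.mpr
      apply Set.biUnion_subset_biUnion_left
      intro i hi
      exact Finset.mem_range.mpr (lt_of_lt_of_le (Finset.mem_range.mp hi) hab)
    have hint : ⋂ m, (S n m)ᶜ = ∅ := by
      rw [← Set.compl_iUnion, hScover n, Set.compl_univ]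
    have htend : Filter.Tendsto (fun m => μ (S n m)ᶜ) Filter.atTop (nhds 0) := by
      have := tendsto_measure_iInter_atTop
        (μ := μ) (s := fun m => (S n m)ᶜ)
        (fun m => ((hSclosed n m).isOpen_compl.measurableSet).nullMeasurableSet)
        hanti ⟨0, measure_ne_top μ _⟩
      rw [hint, measure_empty] at this
      exact this
    have hev := htend.eventually_lt_const (ENNReal.coe_pos.mpr (hε'pos n))
    exact hev.exists
  choose m hm using hchoice
  set K : Set α := ⋂ n, S n (m n) with hK
  have hKclosed : IsClosed K := isClosed_iInter (fun n => hSclosed n (m n))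
  have hKtb : TotallyBounded K := by
    rw [Metric.totallyBounded_iff]
    intro δ hδ
    obtain ⟨n, hn⟩ := exists_nat_one_div_lt hδ
    refine ⟨u '' (Finset.range (m n) : Set ℕ), (Finset.finite_toSet _).image u, ?_⟩
    intro y hy
    have hyS : y ∈ S n (m n) := Set.mem_iInter.mp hy n
    obtain ⟨i, hi, hyi⟩ := Set.mem_iUnion₂.mp hyS
    refine Set.mem_biUnion (Set.mem_image_of_mem u hi) ?_
    have : dist y (u i) ≤ 1/(n+1) := mem_closedBall.mp hyi
    rw [mem_ball]
    calc dist y (u i) ≤ 1/(n+1) := this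
      _ < δ := by exact_mod_cast hn
  have hKcompact : IsCompact K := TotallyBounded.isCompact_of_isClosed hKtb hKclosed
  refine ⟨K, hKcompact, ?_⟩
  have hKc : Kᶜ = ⋃ n, (S n (m n))ᶜ := by
    rw [hK, Set.compl_iInter]
  rw [hKc]
  calc μ (⋃ n, (S n (m n))ᶜ) ≤ ∑' n, μ (S n (m n))ᶜ := measure_iUnion_le _
    _ ≤ ∑' n, (ε' n : ℝ≥0∞) := ENNReal.tsum_le_tsum (fun n => le_of_lt (hm n))
    _ ≤ ε := le_of_lt hε'sum

/-- Inner regularity by compact sets for finite measures on Polish spaces. -/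
lemma exists_compact_approx {α : Type*} [MeasurableSpace α] [TopologicalSpace α]
    [PolishSpace α] [BorelSpace α] (μ : Measure α) [IsFiniteMeasure μ]
    {A : Set α} (hA : MeasurableSet A) {ε : ℝ≥0∞} (hε : ε ≠ 0) :
    ∃ K, K ⊆ A ∧ IsCompact K ∧ μ (A \ K) ≤ ε := by
  have hε2 : (ε / 2) ≠ 0 := by
    simp only [ne_eq, ENNReal.div_eq_zero_iff]
    push_neg
    exact ⟨hε, by norm_num⟩
  obtain ⟨F, hFA, hFclosed, hFsmall⟩ := hA.exists_isClosed_diff_lt (measure_ne_top μ A) hε2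
  obtain ⟨K, hKcompact, hKsmall⟩ := exists_compact_large μ hε2
  refine ⟨F ∩ K, (Set.inter_subset_left).trans hFA, hKcompact.inter_left hFclosed, ?_⟩
  have hsub : A \ (F ∩ K) ⊆ (A \ F) ∪ Kᶜ := by
    intro y hy
    rcases hy with ⟨hyA, hyn⟩
    by_cases hyF : y ∈ F
    · right
      intro hyK
      exact hyn ⟨hyF, hyK⟩
    · left
      exact ⟨hyA, hyF⟩
  calc μ (A \ (F ∩ K)) ≤ μ ((A \ F) ∪ Kᶜ) := measure_mono hsub
    _ ≤ μ (A \ F) + μ Kᶜ := measure_union_le _ _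
    _ ≤ ε / 2 + ε / 2 := add_le_add (le_of_lt hFsmall) hKsmall
    _ = ε := ENNReal.add_halves ε


/-- Numeric core: `e·p·(d+1) < 1` implies `p < x(1-x)^d` for `x = 1/(d+2)`. -/
lemma lll_numeric (p : ℝ) (d : ℕ) (hp0 : 0 ≤ p) (hcrit : Real.exp 1 * p * (d + 1) < 1) :
    p < (1/((d:ℝ)+2)) * (1 - 1/((d:ℝ)+2)) ^ d := by
  set D := (d : ℝ) with hD
  have hD0 : 0 ≤ D := Nat.cast_nonneg d
  have he : 0 < Real.exp 1 := Real.exp_pos 1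
  have hD1 : (0:ℝ) < D + 1 := by linarith
  have hD2 : (0:ℝ) < D + 2 := by linarith
  have h1 : p < 1 / (Real.exp 1 * (D + 1)) := by
    rw [lt_div_iff₀ (by positivity)]
    calc p * (Real.exp 1 * (D + 1)) = Real.exp 1 * p * (D + 1) := by ring
      _ < 1 := hcrit
  have h2 : (1 + 1/(D+1)) ^ (d+1) ≤ Real.exp 1 := by
    have hb : (0:ℝ) ≤ 1 + 1/(D+1) := by positivity
    have hstep : 1 + 1/(D+1) ≤ Real.exp (1/(D+1)) := by
      have := Real.add_one_le_exp (1/(D+1)); linarith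
    calc (1 + 1/(D+1)) ^ (d+1) ≤ (Real.exp (1/(D+1))) ^ (d+1) :=
          pow_le_pow_left₀ hb hstep _
      _ = Real.exp (((d:ℕ)+1 : ℕ) * (1/(D+1))) := by
          rw [Real.exp_nat_mul]
      _ = Real.exp 1 := by
          congr 1
          push_cast
          rw [hD] at hD1 ⊢
          field_simp
  have h3 : 1 / (Real.exp 1 * (D+1)) ≤ (1/(D+2)) * (1 - 1/(D+2)) ^ d := by
    have hx : 1 - 1/(D+2) = (D+1)/(D+2) := by field_simp; ring
    rw [hx, div_pow]
    have hRHS : (1/(D+2)) * ((D+1)^d/(D+2)^d) = (D+1)^d / (D+2)^(d+1) := by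
      rw [pow_succ]
      field_simp
    rw [hRHS, div_le_div_iff₀ (by positivity) (by positivity)]
    have hkey : ((D+2)/(D+1)) ^ (d+1) ≤ Real.exp 1 := by
      have : (D+2)/(D+1) = 1 + 1/(D+1) := by field_simp; ring
      rw [this]; exact h2
    have hmul : ((D+2)/(D+1)) ^ (d+1) * (D+1)^(d+1) = (D+2)^(d+1) := by
      rw [div_pow]
      field_simp
    have hpowpos : (0:ℝ) < (D+1)^(d+1) := by positivity
    calc 1 * (D+2)^(d+1) = (D+2)^(d+1) := by ring
      _ = ((D+2)/(D+1)) ^ (d+1) * (D+1)^(d+1) := hmul.symm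
      _ ≤ Real.exp 1 * (D+1)^(d+1) := mul_le_mul_of_nonneg_right hkey hpowpos.le
      _ = (D+1)^d * (Real.exp 1 * (D+1)) := by rw [pow_succ]; ring
  linarith

end LLLAux

/-- **Lovász Local Lemma** (variable version, possibly infinite constraint set).
If each `Bad c` is measurable with `P[Bad c] ≤ p`, the maximum degree of the dependency graph is
at most `d`, and `e·p·(d+1) < 1`, then `Φ` has a solution. -/
theorem lovasz_local_lemma
    {V Λ C : Type*} [MeasurableSpace Λ] [StandardBorelSpace Λ]
    (Φ : CSP V Λ C) (P : Measure Λ) [IsProbabilityMeasure P]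
    (p : ℝ) (d : ℕ) (hp0 : 0 ≤ p) (hp1 : p < 1)
    (hmeas : ∀ c, MeasurableSet (Φ.Bad c))
    (hbad : ∀ c, Φ.badProb P c ≤ ENNReal.ofReal p)
    (hdeg : ∀ c, (Φ.depGraph.neighborSet c).encard ≤ d)
    (hcrit : Real.exp 1 * p * (d + 1) < 1) :
    ∃ f : V → Λ, Φ.IsSolution f := by
  classical
  haveI hΛne : Nonempty Λ := by
    by_contra h
    rw [not_nonempty_iff] at h
    have h1 : P Set.univ = 1 := measure_univ
    rw [Set.univ_eq_empty_iff.mpr h, measure_empty] at h1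
    exact one_ne_zero h1.symm
  obtain ⟨τ, hτb, hτp⟩ := StandardBorelSpace.polish (α := Λ)
  letI := τ
  haveI := hτb
  haveI := hτp
  haveI : T2Space Λ := inferInstance
  -- numeric setup
  set x : ℝ := 1/((d:ℝ)+2) with hxdef
  have hd0 : (0:ℝ) ≤ (d:ℝ) := Nat.cast_nonneg d
  have hx0 : 0 < x := by rw [hxdef]; positivity
  have hx1 : x < 1 := by
    rw [hxdef, div_lt_one (by positivity)]; linarith
  have h1x : (0:ℝ) < 1 - x := by linarith
  set q : ℝ := x * (1-x)^d with hqdef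
  have hq0 : 0 < q := mul_pos hx0 (pow_pos h1x d)
  have hq1 : q < 1 := by
    have : (1-x)^d ≤ 1 := pow_le_one₀ h1x.le (by linarith)
    nlinarith
  have hpq : p < q := by
    rw [hqdef, hxdef]
    exact lll_numeric p d hp0 hcrit
  have hδ : ENNReal.ofReal (q - p) ≠ 0 := by
    rw [ne_eq, ENNReal.ofReal_eq_zero, not_le]
    linarith
  -- choose compact "good" sets approximating the complements of the bad sets
  have hGex : ∀ c : C, ∃ K : Set (↥(Φ.dom c) → Λ), K ⊆ (Φ.Bad c)ᶜ ∧ IsCompact K ∧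
      (letI := (Φ.dom_finite c).fintype
       ((Measure.pi (fun _ : ↥(Φ.dom c) => P)) Kᶜ).toReal ≤ q) := by
    intro c
    letI := (Φ.dom_finite c).fintype
    haveI : IsProbabilityMeasure (Measure.pi (fun _ : ↥(Φ.dom c) => P)) := by infer_instance
    obtain ⟨K, hKsub, hKcomp, hKsmall⟩ :=
      exists_compact_approx (Measure.pi (fun _ : ↥(Φ.dom c) => P)) (hmeas c).compl hδ
    refine ⟨K, hKsub, hKcomp, ?_⟩
    have hbadc : (Measure.pi (fun _ : ↥(Φ.dom c) => P)) (Φ.Bad c) ≤ ENNReal.ofReal p := hbad c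
    have hcompl : Kᶜ ⊆ Φ.Bad c ∪ ((Φ.Bad c)ᶜ \ K) := by
      intro φ hφ
      by_cases hb : φ ∈ Φ.Bad c
      · exact Or.inl hb
      · exact Or.inr ⟨hb, hφ⟩
    have hle : (Measure.pi (fun _ : ↥(Φ.dom c) => P)) Kᶜ ≤ ENNReal.ofReal q := by
      calc (Measure.pi (fun _ : ↥(Φ.dom c) => P)) Kᶜ
          ≤ (Measure.pi (fun _ : ↥(Φ.dom c) => P)) (Φ.Bad c ∪ ((Φ.Bad c)ᶜ \ K)) :=
            measure_mono hcompl
        _ ≤ (Measure.pi (fun _ : ↥(Φ.dom c) => P)) (Φ.Bad c)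
            + (Measure.pi (fun _ : ↥(Φ.dom c) => P)) ((Φ.Bad c)ᶜ \ K) := measure_union_le _ _
        _ ≤ ENNReal.ofReal p + ENNReal.ofReal (q - p) := add_le_add hbadc hKsmall
        _ = ENNReal.ofReal q := by
            rw [← ENNReal.ofReal_add hp0 (by linarith)]
            congr 1
            ring
    show ((Measure.pi (fun _ : ↥(Φ.dom c) => P)) Kᶜ).toReal ≤ q
    calc ((Measure.pi (fun _ : ↥(Φ.dom c) => P)) Kᶜ).toReal
        ≤ (ENNReal.ofReal q).toReal := ENNReal.toReal_mono (by simp) hle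
      _ = q := ENNReal.toReal_ofReal hq0.le
  choose Good hGsub hGcomp hGsmall using hGex
  -- the good sets are nonempty
  have hGne : ∀ c, (Good c).Nonempty := by
    intro c
    rw [Set.nonempty_iff_ne_empty]
    intro hemp
    letI := (Φ.dom_finite c).fintype
    haveI : IsProbabilityMeasure (Measure.pi (fun _ : ↥(Φ.dom c) => P)) := by infer_instance
    have h1 : ((Measure.pi (fun _ : ↥(Φ.dom c) => P)) (Good c)ᶜ).toReal ≤ q := hGsmall c
    rw [hemp, Set.compl_empty] at h1
    have h2 : ((Measure.pi (fun _ : ↥(Φ.dom c) => P))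
        (Set.univ : Set (↥(Φ.dom c) → Λ))).toReal = 1 := by
      rw [measure_univ, ENNReal.toReal_one]
    rw [h2] at h1
    linarith
  have hGmeas : ∀ c, MeasurableSet (Good c) := by
    intro c
    letI := (Φ.dom_finite c).fintype
    exact (hGcomp c).isClosed.measurableSet
  -- the set of variables occurring in constraints
  set W : Set V := ⋃ c : C, Φ.dom c with hW
  have hdomW : ∀ c, Φ.dom c ⊆ W := fun c => Set.subset_iUnion (fun c => Φ.dom c) c
  -- each variable belongs to only finitely many domains
  have hCvfin : ∀ (v : V) (c0 : C), v ∈ Φ.dom c0 → {c : C | v ∈ Φ.dom c}.Finite := by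
    intro v c0 hv
    have hnb : (Φ.depGraph.neighborSet c0).Finite := by
      by_contra hinf
      have h2 : (Φ.depGraph.neighborSet c0).encard = ⊤ := Set.Infinite.encard_eq hinf
      have h := hdeg c0
      rw [h2, top_le_iff] at h
      simp at h
    have hsub : {c : C | v ∈ Φ.dom c} ⊆ insert c0 (Φ.depGraph.neighborSet c0) := by
      intro c hc
      by_cases hcc : c = c0
      · exact hcc ▸ Set.mem_insert _ _
      · apply Set.mem_insert_of_mem
        rw [SimpleGraph.mem_neighborSet]
        exact (⟨fun h => hcc h.symm, ⟨v, hv, hc⟩⟩ : c0 ≠ c ∧ (Φ.dom c0 ∩ Φ.dom c).Nonempty)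
    exact (hnb.insert c0).subset hsub
  -- the compact per-variable value sets
  set Kv : ↥W → Set Λ := fun v =>
    ⋃ c ∈ {c : C | (v:V) ∈ Φ.dom c},
      {y : Λ | ∃ φ ∈ Good c, ∃ h : (v:V) ∈ Φ.dom c, φ ⟨(v:V), h⟩ = y} with hKv
  have hvex : ∀ v : ↥W, ∃ c : C, (v:V) ∈ Φ.dom c := by
    intro v
    have h : (v:V) ∈ ⋃ c : C, Φ.dom c := v.2
    exact Set.mem_iUnion.mp h
  have hKvcomp : ∀ v : ↥W, IsCompact (Kv v) := by
    intro v
    obtain ⟨c0, hc0⟩ := hvex v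
    rw [hKv]
    apply Set.Finite.isCompact_biUnion (hCvfin (v:V) c0 hc0)
    intro c hc
    letI := (Φ.dom_finite c).fintype
    have himg : {y : Λ | ∃ φ ∈ Good c, ∃ h : (v:V) ∈ Φ.dom c, φ ⟨(v:V), h⟩ = y}
        = (fun φ : ↥(Φ.dom c) → Λ => φ ⟨(v:V), hc⟩) '' Good c := by
      ext y
      constructor
      · rintro ⟨φ, hφ, h, rfl⟩; exact ⟨φ, hφ, rfl⟩
      · rintro ⟨φ, hφ, rfl⟩; exact ⟨φ, hφ, hc, rfl⟩
    rw [himg]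
    exact (hGcomp c).image (continuous_apply _)
  have hKvne : ∀ v : ↥W, (Kv v).Nonempty := by
    intro v
    obtain ⟨c0, hc0⟩ := hvex v
    obtain ⟨φ, hφ⟩ := hGne c0
    refine ⟨φ ⟨(v:V), hc0⟩, ?_⟩
    rw [hKv]
    exact Set.mem_biUnion hc0 ⟨φ, hφ, hc0, rfl⟩
  -- the compact candidate space and the closed constraint sets
  set XX : Set (↥W → Λ) := Set.pi Set.univ Kv with hXX
  have hXXcomp : IsCompact XX := isCompact_univ_pi hKvcomp
  set FF : C → Set (↥W → Λ) :=
    fun c => (fun f (v : ↥(Φ.dom c)) => f ⟨(v:V), hdomW c v.2⟩) ⁻¹' (Good c) with hFF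
  have hFFclosed : ∀ c, IsClosed (FF c) := by
    intro c
    letI := (Φ.dom_finite c).fintype
    apply IsClosed.preimage
    · exact continuous_pi (fun v => continuous_apply _)
    · exact (hGcomp c).isClosed
  -- finite intersection property via the finite local lemma
  have hFIP : ∀ u : Finset C, (XX ∩ ⋂ c ∈ u, FF c).Nonempty := by
    intro u
    set U : Set V := ⋃ c ∈ u, Φ.dom c with hU
    have hUfin : U.Finite := Set.Finite.biUnion u.finite_toSet (fun c _ => Φ.dom_finite c)
    letI := hUfin.fintype
    have hdomU : ∀ c ∈ u, Φ.dom c ⊆ U := by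
      intro c hc v hv
      rw [hU]
      exact Set.mem_biUnion hc hv
    set μ : Measure (↥U → Λ) := Measure.pi (fun _ : ↥U => P) with hμ
    haveI : IsProbabilityMeasure μ := by rw [hμ]; infer_instance
    set inc : ∀ (c : C), Φ.dom c ⊆ U → (↥(Φ.dom c) → ↥U) :=
      fun c h v => ⟨(v:V), h v.2⟩ with hinc
    set A : C → Set (↥U → Λ) := fun c =>
      if h : Φ.dom c ⊆ U then (fun f : ↥U → Λ => f ∘ inc c h) ⁻¹' ((Good c)ᶜ) else ∅ with hA
    have hAmeas : ∀ c, MeasurableSet (A c) := by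
      intro c
      rw [hA]
      dsimp only
      split
      · exact (measurable_pi_lambda _ (fun v => measurable_pi_apply _)) ((hGmeas c).compl)
      · exact MeasurableSet.empty
    have hAsupp : ∀ c, SuppOn {w : ↥U | (w:V) ∈ Φ.dom c} (A c) := by
      intro c f g hfg hf
      rw [hA] at hf ⊢
      dsimp only at hf ⊢
      by_cases h : Φ.dom c ⊆ U
      · rw [dif_pos h] at hf ⊢
        have heq : f ∘ inc c h = g ∘ inc c h := by
          funext v
          exact hfg (inc c h v) v.2
        rw [Set.mem_preimage] at hf ⊢
        rw [← heq]
        exact hf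
      · rw [dif_neg h] at hf
        exact absurd hf (Set.notMem_empty f)
    have hAbound : ∀ c, (μ (A c)).toReal ≤ x * (1-x)^d := by
      intro c
      rw [hA]
      dsimp only
      by_cases h : Φ.dom c ⊆ U
      · rw [dif_pos h]
        letI := (Φ.dom_finite c).fintype
        have hinj : Function.Injective (inc c h) := by
          intro a b hab
          apply Subtype.ext
          have h2 := congrArg Subtype.val hab
          simpa [hinc] using h2
        have heq := pi_comp_inj P (inc c h) hinj ((Good c)ᶜ) (hGmeas c).compl
        rw [hμ, heq, ← hqdef]
        exact (hGsmall c : _)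
      · rw [dif_neg h, measure_empty]
        simp only [ENNReal.toReal_zero
        ]
        positivity
    have hAind : ∀ (c : C) (T : Finset C), (∀ j ∈ T, j ≠ c ∧ ¬ Φ.depGraph.Adj c j) →
        μ (A c ∩ ⋂ j ∈ T, (A j)ᶜ) = μ (A c) * μ (⋂ j ∈ T, (A j)ᶜ) := by
      intro c T hT
      have hdisj : Disjoint {w : ↥U | (w:V) ∈ Φ.dom c}
          (⋃ j ∈ T, {w : ↥U | (w:V) ∈ Φ.dom j}) := by
        rw [Set.disjoint_left]
        intro w hws hwt
        rw [Set.mem_iUnion₂] at hwt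
        obtain ⟨j, hjT, hwj⟩ := hwt
        obtain ⟨hne, hnadj⟩ := hT j hjT
        apply hnadj
        exact (⟨fun hh => hne hh.symm, ⟨(w:V), hws, hwj⟩⟩ : c ≠ j ∧ (Φ.dom c ∩ Φ.dom j).Nonempty)
      have hFsupp : SuppOn (⋃ j ∈ T, {w : ↥U | (w:V) ∈ Φ.dom j}) (⋂ j ∈ T, (A j)ᶜ) := by
        apply SuppOn.biInter
        intro j hj
        refine ((hAsupp j).compl).mono ?_
        intro w hw
        exact Set.mem_biUnion hj hw
      have hFmeas : MeasurableSet (⋂ j ∈ T, (A j)ᶜ) :=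
        Finset.measurableSet_biInter T (fun j _ => (hAmeas j).compl)
      rw [hμ]
      exact pi_indep P _ _ hdisj _ _ (hAmeas c) hFmeas (hAsupp c) hFsupp
    have hpos := lll_main μ A hAmeas Φ.depGraph x hx0 hx1 d hdeg hAbound hAind u
    have hne : (⋂ j ∈ u, (A j)ᶜ).Nonempty := by
      rw [Set.nonempty_iff_ne_empty]
      intro hh
      rw [hh, measure_empty] at hpos
      simp at hpos
    obtain ⟨f0, hf0⟩ := hne
    rw [Set.mem_iInter₂] at hf0
    have hgood0 : ∀ (c) (hc : c ∈ u), f0 ∘ inc c (hdomU c hc) ∈ Good c := by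
      intro c hc
      have h1 := hf0 c hc
      rw [hA] at h1
      dsimp only at h1
      rw [Set.mem_compl_iff, dif_pos (hdomU c hc), Set.mem_preimage,
        Set.notMem_compl_iff] at h1
      exact h1
    choose pick hpick using hKvne
    refine ⟨fun v => if h : (v:V) ∈ U then f0 ⟨(v:V), h⟩ else pick v, ?_, ?_⟩
    · rw [hXX, Set.mem_univ_pi]
      intro v
      by_cases h : (v:V) ∈ U
      · rw [dif_pos h]
        have h' : (v:V) ∈ ⋃ c ∈ u, Φ.dom c := by rw [← hU]; exact h
        rw [Set.mem_iUnion₂] at h'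
        obtain ⟨c, hcu, hvc⟩ := h'
        rw [hKv]
        apply Set.mem_biUnion (show c ∈ {c : C | (v:V) ∈ Φ.dom c} from hvc)
        exact ⟨f0 ∘ inc c (hdomU c hcu), hgood0 c hcu, hvc, rfl⟩
      · rw [dif_neg h]
        exact hpick v
    · rw [Set.mem_iInter₂]
      intro c hcu
      rw [hFF]
      dsimp only
      rw [Set.mem_preimage]
      have heq : (fun v : ↥(Φ.dom c) =>
          (fun w : ↥W => if h : (w:V) ∈ U then f0 ⟨(w:V), h⟩ else pick w)
            ⟨(v:V), hdomW c v.2⟩)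
          = f0 ∘ inc c (hdomU c hcu) := by
        funext v
        dsimp only
        rw [dif_pos (hdomU c hcu v.2)]
        rfl
      rw [heq]
      exact hgood0 c hcu
  obtain ⟨f, hfXX, hfF⟩ := hXXcomp.inter_iInter_nonempty FF hFFclosed hFIP
  refine ⟨fun v => if h : v ∈ W then f ⟨v, h⟩ else Classical.arbitrary Λ, ?_⟩
  intro c hviol
  unfold CSP.violates at hviol
  have heq : (fun v : ↥(Φ.dom c) =>
      if h : (v:V) ∈ W then f ⟨(v:V), h⟩ else Classical.arbitrary Λ)
      = fun v : ↥(Φ.dom c) => f ⟨(v:V), hdomW c v.2⟩ := by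
    funext v
    rw [dif_pos (hdomW c v.2)]
  rw [heq] at hviol
  have hfc : f ∈ FF c := by
    rw [Set.mem_iInter] at hfF
    exact hfF c
  rw [hFF] at hfc
  dsimp only at hfc
  rw [Set.mem_preimage] at hfc
  exact (hGsub c hfc) hviol
end

section
/- (Moser–Tardos.) Let Π = (V, Λ, C, dom, Bad) be a CSP and P a probability measure on Λ making (Λ, P) a standard probability space, such that each Bad(c) is P^{dom(c)}-measurable with P[Bad(c)] ≤ p, the maximum degree of the dependency graph D_Π is at most d, and e·p·(d+1) < 1, for some p ∈ [0,1) and d ∈ ℕ. Sample a random table t : V → Λ^ℕ from the product probability space (Λ^{V×ℕ}, P^{V×ℕ}). Then for each v ∈ V, the probability that every f ∈ MTA(Π, t) is defined on v equals 1. -/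
/-!
If the Moser–Tardos algorithm resamples `v` at least `N` times, the last of these resamplings
has a witness: the earlier resamplings from which it can be reached by a chain of resamplings,
each later than the previous one and overlapping it, placed in layers according to the length of
their longest chain. This is a layered structure with at least `N` nodes rooted at a constraint
containing `v`, each layer is an independent set, and the table entries read at its nodes are
pairwise distinct and determined by the structure alone, so the structure occurs with probability
at most `p ^ size`.

Splitting a witness along the depth-one ancestors of its nodes bounds the generating function
`∑ x ^ |T|` of witnesses rooted at `c` by `x ∏_{c' ∈ N[c]} (1 + ∑ x ^ |T'|)`, hence by
`μ = 1/(d+1)` when `x = 1/(e(d+1))`, because `(1 + 1/(d+1))^(d+1) ≤ e`. As `p < x`, witnesses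
with at least `N` nodes occur with probability `O((p/x)^N)`, which tends to `0`.
-/

open MeasureTheory Set
open scoped ENNReal

section Graph

variable {C : Type*} (G : SimpleGraph C)

lemma self_mem_closedNbhd (c : C) : c ∈ closedNbhd G c := Set.mem_insert c _

lemma mem_closedNbhd_comm {c c' : C} : c' ∈ closedNbhd G c ↔ c ∈ closedNbhd G c' := by
  simp only [closedNbhd, Set.mem_insert_iff, SimpleGraph.mem_neighborSet, eq_comm (a := c),
    G.adj_comm]

lemma gball_mono (c : C) {R R' : ℕ} (h : R ≤ R') : gball G c R ⊆ gball G c R' := by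
  induction h with
  | refl => exact subset_rfl
  | step _ ih => exact ih.trans Set.subset_union_left

lemma mem_gball_succ {c₀ c c' : C} {R : ℕ} (hc : c ∈ gball G c₀ R)
    (hc' : c' ∈ closedNbhd G c) : c' ∈ gball G c₀ (R + 1) := by
  rcases hc' with rfl | hadj
  · exact Or.inl hc
  · exact Or.inr (Set.mem_biUnion hc hadj)

variable [G.LocallyFinite]

lemma closedNbhd_finite (c : C) : (closedNbhd G c).Finite :=
  (G.neighborSet c).toFinite.insert c

lemma card_closedNbhd_le (c : C) : (closedNbhd_finite G c).toFinset.card ≤ G.degree c + 1 := by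
  classical
  rw [← G.card_neighborFinset_eq_degree]
  refine (Finset.card_le_card fun c' hc' => ?_).trans (Finset.card_insert_le c _)
  simpa [closedNbhd] using hc'

lemma gball_finite_of_locallyFinite (c : C) (R : ℕ) : (gball G c R).Finite :=
  gball_finite G (fun c => (G.neighborSet c).toFinite) c R

end Graph

section ProductMeasure

open Measure

variable {ι Λ : Type*} [MeasurableSpace Λ] {P : Measure Λ} [IsProbabilityMeasure P]

theorem IsProductOf.eq_infinitePi {Q : Measure (ι → Λ)} (hQ : IsProductOf Q P) :
    Q = infinitePi fun _ => P :=
  Measure.eq_infinitePi _ fun s A hA => hQ s A fun i _ => hA i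

lemma infinitePi_map_comp_of_injective {κ : Type*} {σ : κ → ι} (hσ : σ.Injective) :
    (infinitePi fun _ : ι => P).map (fun t => t ∘ σ) = infinitePi fun _ : κ => P := by
  classical
  refine Measure.eq_infinitePi _ fun s A hA => ?_
  have hpre : (fun t : ι → Λ => t ∘ σ) ⁻¹' Set.pi s A =
      Set.pi ↑(s.map ⟨σ, hσ⟩) (Function.extend σ A fun _ => Set.univ) := by
    ext t
    simp [hσ.extend_apply]
  have hext : ∀ i, MeasurableSet (Function.extend σ A (fun _ => Set.univ) i) := by
    intro i
    by_cases h : ∃ k, σ k = i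
    · obtain ⟨k, rfl⟩ := h
      simpa [hσ.extend_apply] using hA k
    · simp [Function.extend_apply' _ _ _ h]
  rw [map_apply (by fun_prop) (.pi (Finset.countable_toSet _) fun i _ => hA i), hpre,
    infinitePi_pi _ fun i _ => hext i, Finset.prod_map]
  simp [hσ.extend_apply]

end ProductMeasure

theorem Finset.sum_prod_le_prod_sum {α ι β R : Type*} [CommSemiring R] [PartialOrder R]
    [IsOrderedRing R] {S : Finset α} {s : Finset ι} {t : ι → Finset β} {F : α → ι → β}
    {g : ι → β → R} (hg : ∀ i ∈ s, ∀ b ∈ t i, 0 ≤ g i b) (hF : ∀ a ∈ S, ∀ i ∈ s, F a i ∈ t i)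
    (hinj : ∀ a ∈ S, ∀ a' ∈ S, (∀ i ∈ s, F a i = F a' i) → a = a') :
    ∑ a ∈ S, ∏ i ∈ s, g i (F a i) ≤ ∏ i ∈ s, ∑ b ∈ t i, g i b := by
  classical
  let G : α → (i : ι) → i ∈ s → β := fun a i _ => F a i
  have hGinj : Set.InjOn G S := fun a ha a' ha' h =>
    hinj a ha a' ha' fun i hi => congrFun (congrFun h i) hi
  rw [Finset.prod_sum]
  calc ∑ a ∈ S, ∏ i ∈ s, g i (F a i)
      = ∑ p ∈ S.image G, ∏ i ∈ s.attach, g i (p i i.2) := by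
        rw [Finset.sum_image hGinj]
        exact Finset.sum_congr rfl fun a _ => (Finset.prod_attach s fun i => g i (F a i)).symm
    _ ≤ ∑ p ∈ s.pi t, ∏ i ∈ s.attach, g i (p i i.2) := by
        refine Finset.sum_le_sum_of_subset_of_nonneg ?_ fun p hp _ => ?_
        · intro p hp
          obtain ⟨a, ha, rfl⟩ := Finset.mem_image.1 hp
          exact Finset.mem_pi.2 fun i hi => hF a ha i hi
        · exact Finset.prod_nonneg fun i _ => hg i i.2 _ (Finset.mem_pi.1 hp i i.2)

lemma Prod.map_add_one_id_injective {C : Type*} :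
    Function.Injective (Prod.map (· + 1) id : ℕ × C → ℕ × C) :=
  (add_left_injective 1).prodMap Function.injective_id

lemma pow_le_div_pow_mul_pow {p x : ℝ} (hp : 0 ≤ p) (hpx : p ≤ x) {M k : ℕ} (hMk : M ≤ k) :
    p ^ k ≤ (p / x) ^ M * x ^ k := by
  rcases hp.eq_or_lt with rfl | hp
  · rcases M.eq_zero_or_pos with rfl | hM
    · simpa using pow_le_pow_left₀ le_rfl hpx k
    · simp [zero_pow (hM.trans_le hMk).ne', zero_pow hM.ne']
  have hx : 0 < x := hp.trans_le hpx
  calc p ^ k = (p / x) ^ k * x ^ k := by rw [div_pow, div_mul_cancel₀ _ (pow_pos hx k).ne']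
    _ ≤ (p / x) ^ M * x ^ k := mul_le_mul_of_nonneg_right
      (pow_le_pow_of_le_one (by positivity) (div_le_one_of_le₀ hpx hx.le) hMk) (by positivity)

theorem Finset.sum_filter_pow_le_div_pow_mul_sum_pow {α : Type*} (S : Finset α) (k : α → ℕ)
    {p x : ℝ} (hp : 0 ≤ p) (hpx : p ≤ x) (M : ℕ) :
    ∑ a ∈ S.filter (M ≤ k ·), p ^ k a ≤ (p / x) ^ M * ∑ a ∈ S, x ^ k a := by
  have hx : 0 ≤ x := hp.trans hpx
  rw [Finset.mul_sum]
  calc ∑ a ∈ S.filter (M ≤ k ·), p ^ k a ≤ ∑ a ∈ S.filter (M ≤ k ·), (p / x) ^ M * x ^ k a :=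
        Finset.sum_le_sum fun a ha => pow_le_div_pow_mul_pow hp hpx (Finset.mem_filter.1 ha).2
    _ ≤ ∑ a ∈ S, (p / x) ^ M * x ^ k a :=
        Finset.sum_le_sum_of_subset_of_nonneg (Finset.filter_subset _ _) fun _ _ _ => by positivity

theorem IsIndep.eq_of_mem_dom {V Λ C : Type*} {Φ : CSP V Λ C} {s : Set C}
    (hs : IsIndep Φ.depGraph s) {c c' : C} (hc : c ∈ s) (hc' : c' ∈ s) {u : V}
    (hu : u ∈ Φ.dom c) (hu' : u ∈ Φ.dom c') : c = c' := by
  by_contra hne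
  exact hs c hc c' hc' ⟨hne, u, hu, hu'⟩

namespace CSP

section Witnesses

variable {V Λ C : Type*} (Φ : CSP V Λ C)

lemma mem_closedNbhd_of_mem_dom {u : V} {c c' : C} (hc : u ∈ Φ.dom c) (hc' : u ∈ Φ.dom c') :
    c' ∈ closedNbhd Φ.depGraph c := by
  by_cases h : c' = c
  · exact Or.inl h
  · exact Or.inr ⟨Ne.symm h, u, hc, hc'⟩

lemma violates_congr {f g : V → Λ} {c : C} (h : ∀ u ∈ Φ.dom c, f u = g u) :
    Φ.violates f c ↔ Φ.violates g c := by
  have : (fun u : ↥(Φ.dom c) => f u) = fun u : ↥(Φ.dom c) => g u := funext fun u => h u u.2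
  simp only [violates, this]

/-- A layered witness rooted at `c`: its nodes `(e, c')` are constraints `c'` at depth `e`. -/
structure IsWitness (c : C) (T : Finset (ℕ × C)) : Prop where
  root_mem : (0, c) ∈ T
  eq_of_mem_zero {c' : C} : (0, c') ∈ T → c' = c
  exists_parent {e : ℕ} {c' : C} : (e + 1, c') ∈ T →
    ∃ c'', (e, c'') ∈ T ∧ c' ∈ closedNbhd Φ.depGraph c''
  not_adj {e : ℕ} {c' c'' : C} : (e, c') ∈ T → (e, c'') ∈ T → ¬ Φ.depGraph.Adj c' c''

open Classical in
noncomputable def witnessLevel (T : Finset (ℕ × C)) (e : ℕ) (u : V) : ℕ :=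
  (T.filter fun y => e < y.1 ∧ u ∈ Φ.dom y.2).card

/-- The node `(e, c)` reads each variable `u` of `c` at the level given by the number of deeper
nodes containing `u`: these are the resamplings of `u` that the algorithm performed before. -/
def Occurs (T : Finset (ℕ × C)) : Set ((V × ℕ) → Λ) :=
  {t | ∀ y ∈ T, Φ.violates (fun u => t (u, Φ.witnessLevel T y.1 u)) y.2}

variable {Φ}

lemma witnessLevel_lt {T : Finset (ℕ × C)} {e e' : ℕ} {c : C} {u : V} (hy : (e', c) ∈ T)
    (hu : u ∈ Φ.dom c) (he : e < e') : Φ.witnessLevel T e' u < Φ.witnessLevel T e u := by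
  classical
  refine Finset.card_lt_card (Finset.ssubset_iff_of_subset ?_ |>.2 ⟨(e', c), ?_, ?_⟩)
  · intro y hy
    simp only [Finset.mem_filter] at hy ⊢
    exact ⟨hy.1, he.trans hy.2.1, hy.2.2⟩
  · simp [hy, he, hu]
  · simp

lemma IsWitness.eq_of_witnessLevel_eq {c : C} {T : Finset (ℕ × C)} (hT : Φ.IsWitness c T)
    {y y' : ℕ × C} (hy : y ∈ T) (hy' : y' ∈ T) {u : V} (hu : u ∈ Φ.dom y.2)
    (hu' : u ∈ Φ.dom y'.2) (h : Φ.witnessLevel T y.1 u = Φ.witnessLevel T y'.1 u) : y = y' := by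
  rcases lt_trichotomy y.1 y'.1 with hlt | heq | hlt
  · exact absurd h (witnessLevel_lt hy' hu' hlt).ne'
  · refine Prod.ext heq ?_
    by_contra hne
    exact hT.not_adj hy (heq ▸ hy') ⟨hne, u, hu, hu'⟩
  · exact absurd h (witnessLevel_lt hy hu hlt).ne

open Measure in
theorem IsWitness.measure_occurs [MeasurableSpace Λ] {P : Measure Λ} [IsProbabilityMeasure P]
    {Q : Measure ((V × ℕ) → Λ)} (hQ : IsProductOf Q P) (hmeas : ∀ c, MeasurableSet (Φ.Bad c))
    {c : C} {T : Finset (ℕ × C)} (hT : Φ.IsWitness c T) :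
    Q (Φ.Occurs T) = ∏ y ∈ T, Φ.badProb P y.2 := by
  let σ : (Σ y : T, Φ.dom y.1.2) → V × ℕ := fun i => (i.2, Φ.witnessLevel T i.1.1.1 i.2)
  have hσ : σ.Injective := fun i j h => by
    have hu : (i.2 : V) = j.2 := congrArg Prod.fst h
    refine Sigma.subtype_ext (Subtype.ext ?_) hu
    refine hT.eq_of_witnessLevel_eq i.1.2 j.1.2 i.2.2 (hu ▸ j.2.2) ?_
    simpa [σ, hu] using congrArg Prod.snd h
  have hpre : Φ.Occurs T = (MeasurableEquiv.piCurry (fun _ _ => Λ) ∘ fun t => t ∘ σ) ⁻¹'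
      Set.univ.pi fun y : T => Φ.Bad y.1.2 := by
    ext t
    exact ⟨fun h y _ => h y.1 y.2, fun h y hy => h ⟨y, hy⟩ trivial⟩
  rw [hpre, ← map_apply (by fun_prop) (.univ_pi fun y => hmeas _), ← map_map (by fun_prop)
    (by fun_prop), hQ.eq_infinitePi, infinitePi_map_comp_of_injective hσ,
    infinitePi_map_piCurry (fun _ _ => P), infinitePi_eq_pi, pi_pi, ← Finset.prod_coe_sort T]
  refine Finset.prod_congr rfl fun y _ => ?_
  let _ : Fintype (Φ.dom y.1.2) := (Φ.dom_finite _).fintype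
  rw [infinitePi_eq_pi]
  rfl

end Witnesses

section WitnessesUpTo

variable {V Λ C : Type*} {Φ : CSP V Λ C} {c : C} {T : Finset (ℕ × C)}

namespace IsWitness

lemma mem_gball (hT : Φ.IsWitness c T) : ∀ {e : ℕ} {c' : C}, (e, c') ∈ T →
    c' ∈ gball Φ.depGraph c e
  | 0, _, h => hT.eq_of_mem_zero h
  | _ + 1, _, h =>
    have ⟨_, hpar, hadj⟩ := hT.exists_parent h
    mem_gball_succ _ (hT.mem_gball hpar) hadj

lemma exists_mem_of_le (hT : Φ.IsWitness c T) : ∀ {e : ℕ} {c' : C}, (e, c') ∈ T →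
    ∀ e' ≤ e, ∃ c'', (e', c'') ∈ T
  | 0, c', h, _, he => ⟨c', by rwa [Nat.le_zero.1 he]⟩
  | e + 1, c', h, e', he => by
    rcases Nat.of_le_succ he with he | rfl
    · have ⟨_, hpar, _⟩ := hT.exists_parent h
      exact hT.exists_mem_of_le hpar e' he
    · exact ⟨c', h⟩

lemma fst_lt_card (hT : Φ.IsWitness c T) {y : ℕ × C} (hy : y ∈ T) : y.1 < T.card := by
  classical
  have hsub : Finset.range (y.1 + 1) ⊆ T.image Prod.fst := fun e he => by
    obtain ⟨c', hc'⟩ := hT.exists_mem_of_le hy e (Nat.lt_succ_iff.1 (Finset.mem_range.1 he))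
    exact Finset.mem_image.2 ⟨_, hc', rfl⟩
  simpa using (Finset.card_le_card hsub).trans Finset.card_image_le

end IsWitness

variable (Φ) [Φ.depGraph.LocallyFinite]

open Classical in
noncomputable def witnessesUpTo (c : C) (n : ℕ) : Finset (Finset (ℕ × C)) :=
  ((Finset.range n ×ˢ (gball_finite_of_locallyFinite Φ.depGraph c n).toFinset).powerset).filter
    fun T => Φ.IsWitness c T ∧ T.card ≤ n

variable {Φ}

lemma mem_witnessesUpTo {n : ℕ} : T ∈ Φ.witnessesUpTo c n ↔ Φ.IsWitness c T ∧ T.card ≤ n := by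
  classical
  refine ⟨fun h => (Finset.mem_filter.1 h).2, fun ⟨hT, hn⟩ => Finset.mem_filter.2 ⟨?_, hT, hn⟩⟩
  refine Finset.mem_powerset.2 fun y hy => Finset.mem_product.2 ⟨?_, ?_⟩
  · exact Finset.mem_range.2 ((hT.fst_lt_card hy).trans_le hn)
  · rw [Set.Finite.mem_toFinset]
    exact gball_mono _ _ ((hT.fst_lt_card hy).le.trans hn) (hT.mem_gball hy)

lemma witnessesUpTo_mono {m n : ℕ} (h : m ≤ n) : Φ.witnessesUpTo c m ⊆ Φ.witnessesUpTo c n :=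
  fun _ hT => mem_witnessesUpTo.2 ⟨(mem_witnessesUpTo.1 hT).1, (mem_witnessesUpTo.1 hT).2.trans h⟩

end WitnessesUpTo

section Decomposition

variable {V Λ C : Type*} (Φ : CSP V Λ C) (T : Finset (ℕ × C))

open Classical in
noncomputable def witnessParent (e : ℕ) (c' : C) : C :=
  if h : ∃ c'', (e, c'') ∈ T ∧ c' ∈ closedNbhd Φ.depGraph c'' then h.choose else c'

/-- The ancestor at depth `1` of the node `(e + 1, c')`, following the chosen parents. -/
noncomputable def witnessBranch : ℕ → C → C
  | 0, c' => c'
  | e + 1, c' => witnessBranch e (Φ.witnessParent T (e + 1) c')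

open Classical in
/-- The nodes of `T` below the depth-one node `b`, moved one level up. -/
noncomputable def subwitness (b : C) : Finset (ℕ × C) :=
  (T.preimage _ (Prod.map_add_one_id_injective.injOn)).filter fun y => Φ.witnessBranch T y.1 y.2 = b

variable {Φ T}

lemma mem_subwitness {b c' : C} {e : ℕ} :
    (e, c') ∈ Φ.subwitness T b ↔ (e + 1, c') ∈ T ∧ Φ.witnessBranch T e c' = b := by
  classical
  simp [subwitness]

namespace IsWitness

variable {c : C} (hT : Φ.IsWitness c T)
include hT

lemma witnessParent_spec {e : ℕ} {c' : C} (h : (e + 1, c') ∈ T) :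
    (e, Φ.witnessParent T e c') ∈ T ∧ c' ∈ closedNbhd Φ.depGraph (Φ.witnessParent T e c') := by
  have hex := hT.exists_parent h
  rw [witnessParent, dif_pos hex]
  exact hex.choose_spec

lemma witnessBranch_mem : ∀ {e : ℕ} {c' : C}, (e + 1, c') ∈ T →
    (1, Φ.witnessBranch T e c') ∈ T
  | 0, _, h => h
  | _ + 1, _, h => by
    rw [witnessBranch]
    exact witnessBranch_mem (hT.witnessParent_spec h).1

lemma witnessBranch_mem_closedNbhd {e : ℕ} {c' : C} (h : (e + 1, c') ∈ T) :
    Φ.witnessBranch T e c' ∈ closedNbhd Φ.depGraph c := by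
  have ⟨hpar, hadj⟩ := hT.witnessParent_spec (hT.witnessBranch_mem h)
  rwa [hT.eq_of_mem_zero hpar] at hadj

lemma subwitness {b : C} (hne : (Φ.subwitness T b).Nonempty) :
    Φ.IsWitness b (Φ.subwitness T b) where
  root_mem := by
    obtain ⟨⟨e, c'⟩, hy⟩ := hne
    obtain ⟨hyT, rfl⟩ := mem_subwitness.1 hy
    exact mem_subwitness.2 ⟨hT.witnessBranch_mem hyT, rfl⟩
  eq_of_mem_zero h := (mem_subwitness.1 h).2
  exists_parent h := by
    obtain ⟨hT', rfl⟩ := mem_subwitness.1 h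
    have ⟨hpar, hadj⟩ := hT.witnessParent_spec hT'
    exact ⟨_, mem_subwitness.2 ⟨hpar, rfl⟩, hadj⟩
  not_adj h h' := hT.not_adj (mem_subwitness.1 h).1 (mem_subwitness.1 h').1

variable [Φ.depGraph.LocallyFinite]

open Classical in
lemma eq_insert_biUnion_subwitness : T = insert (0, c)
    ((closedNbhd_finite Φ.depGraph c).toFinset.biUnion fun b =>
      (Φ.subwitness T b).image (Prod.map (· + 1) id)) := by
  ext ⟨e, c'⟩
  simp only [Finset.mem_insert, Finset.mem_biUnion, Finset.mem_image, Set.Finite.mem_toFinset,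
    Prod.exists, Prod.map_apply, id, Prod.mk.injEq]
  constructor
  · intro h
    rcases e with _ | e
    · exact Or.inl ⟨rfl, hT.eq_of_mem_zero h⟩
    · exact Or.inr ⟨_, hT.witnessBranch_mem_closedNbhd h, e, c',
        mem_subwitness.2 ⟨h, rfl⟩, rfl, rfl⟩
  · rintro (⟨rfl, rfl⟩ | ⟨b, -, e, c', h, rfl, rfl⟩)
    · exact hT.root_mem
    · exact (mem_subwitness.1 h).1

lemma card_eq_one_add_sum_card_subwitness :
    T.card = 1 + ∑ b ∈ (closedNbhd_finite Φ.depGraph c).toFinset, (Φ.subwitness T b).card := by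
  classical
  conv_lhs => rw [hT.eq_insert_biUnion_subwitness]
  rw [Finset.card_insert_of_notMem, Finset.card_biUnion, add_comm]
  · simp only [Finset.card_image_of_injective _ Prod.map_add_one_id_injective]
  · intro b _ b' _ hbb'
    simp only [Function.onFun, Finset.disjoint_left, Finset.mem_image]
    rintro _ ⟨⟨e, c'⟩, h, rfl⟩ ⟨⟨e', c''⟩, h', heq⟩
    obtain ⟨rfl, rfl⟩ : e' = e ∧ c'' = c' := by simpa using heq
    exact hbb' ((mem_subwitness.1 h).2.symm.trans (mem_subwitness.1 h').2)
  · simp [Prod.map]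

end IsWitness

end Decomposition

section Counting

variable {V Λ C : Type*} {Φ : CSP V Λ C} [Φ.depGraph.LocallyFinite]

lemma witnessesUpTo_zero (c : C) : Φ.witnessesUpTo c 0 = ∅ :=
  Finset.eq_empty_of_forall_notMem fun T hT => by
    obtain ⟨hT, h0⟩ := mem_witnessesUpTo.1 hT
    exact Finset.notMem_empty _ (Finset.card_eq_zero.1 (Nat.le_zero.1 h0) ▸ hT.root_mem)

open Classical in
lemma subwitness_mem_witnessesUpTo {c b : C} {n : ℕ} {T : Finset (ℕ × C)}
    (hT : T ∈ Φ.witnessesUpTo c (n + 1)) (hb : b ∈ (closedNbhd_finite Φ.depGraph c).toFinset) :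
    Φ.subwitness T b ∈ insert ∅ (Φ.witnessesUpTo b n) := by
  obtain ⟨hT, hn⟩ := mem_witnessesUpTo.1 hT
  rcases (Φ.subwitness T b).eq_empty_or_nonempty with hempty | hne
  · exact hempty ▸ Finset.mem_insert_self _ _
  refine Finset.mem_insert_of_mem (mem_witnessesUpTo.2 ⟨hT.subwitness hne, ?_⟩)
  have := Finset.single_le_sum (fun b' _ => (Φ.subwitness T b').card.zero_le) hb
  have := hT.card_eq_one_add_sum_card_subwitness
  omega

lemma sum_witnessesUpTo_succ_le {x : ℝ} (hx : 0 ≤ x) (c : C) (n : ℕ) :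
    ∑ T ∈ Φ.witnessesUpTo c (n + 1), x ^ T.card ≤
      x * ∏ b ∈ (closedNbhd_finite Φ.depGraph c).toFinset,
        (1 + ∑ T ∈ Φ.witnessesUpTo b n, x ^ T.card) := by
  classical
  have hinsert : ∀ b, 1 + ∑ T ∈ Φ.witnessesUpTo b n, x ^ T.card =
      ∑ A ∈ insert ∅ (Φ.witnessesUpTo b n), x ^ A.card := fun b => by
    rw [Finset.sum_insert fun h => Finset.notMem_empty _ (mem_witnessesUpTo.1 h).1.root_mem,
      Finset.card_empty, pow_zero]
  simp only [hinsert]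
  calc ∑ T ∈ Φ.witnessesUpTo c (n + 1), x ^ T.card
      = x * ∑ T ∈ Φ.witnessesUpTo c (n + 1),
          ∏ b ∈ (closedNbhd_finite Φ.depGraph c).toFinset, x ^ (Φ.subwitness T b).card := by
        rw [Finset.mul_sum]
        refine Finset.sum_congr rfl fun T hT => ?_
        rw [(mem_witnessesUpTo.1 hT).1.card_eq_one_add_sum_card_subwitness, pow_add, pow_one,
          Finset.prod_pow_eq_pow_sum]
    _ ≤ _ := by
        refine mul_le_mul_of_nonneg_left (Finset.sum_prod_le_prod_sum
          (fun _ _ _ _ => pow_nonneg hx _) (fun _ hT _ hb => subwitness_mem_witnessesUpTo hT hb)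
          fun T hT T' hT' h => ?_) hx
        rw [(mem_witnessesUpTo.1 hT).1.eq_insert_biUnion_subwitness,
          (mem_witnessesUpTo.1 hT').1.eq_insert_biUnion_subwitness]
        exact congrArg _ (Finset.biUnion_congr rfl fun b hb => by rw [h b hb])

theorem sum_witnessesUpTo_le {d : ℕ} (hdeg : ∀ c, Φ.depGraph.degree c ≤ d) {x μ : ℝ}
    (hx : 0 ≤ x) (hμ : 0 ≤ μ) (hxμ : x * (1 + μ) ^ (d + 1) ≤ μ) :
    ∀ n c, ∑ T ∈ Φ.witnessesUpTo c n, x ^ T.card ≤ μ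
  | 0, c => by simpa [witnessesUpTo_zero] using hμ
  | n + 1, c => calc
    _ ≤ x * ∏ b ∈ (closedNbhd_finite Φ.depGraph c).toFinset,
          (1 + ∑ T ∈ Φ.witnessesUpTo b n, x ^ T.card) := sum_witnessesUpTo_succ_le hx c n
    _ ≤ x * ∏ _b ∈ (closedNbhd_finite Φ.depGraph c).toFinset, (1 + μ) := by
        gcongr with b
        exact sum_witnessesUpTo_le hdeg hx hμ hxμ n b
    _ ≤ x * (1 + μ) ^ (d + 1) := by
        rw [Finset.prod_const]
        gcongr
        · linarith
        · exact (card_closedNbhd_le _ c).trans (by simpa using hdeg c)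
    _ ≤ μ := hxμ

end Counting

section LongWitnesses

variable {V Λ C : Type*} {Φ : CSP V Λ C}

variable (Φ) in
def longWitnessEvent (c : C) (M : ℕ) : Set ((V × ℕ) → Λ) :=
  {t | ∃ T, Φ.IsWitness c T ∧ M ≤ T.card ∧ t ∈ Φ.Occurs T}

variable [MeasurableSpace Λ] {P : Measure Λ} [IsProbabilityMeasure P]
  {Q : Measure ((V × ℕ) → Λ)} {p : ℝ} [Φ.depGraph.LocallyFinite]

theorem measure_longWitnessEvent_le (hQ : IsProductOf Q P) (hmeas : ∀ c, MeasurableSet (Φ.Bad c))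
    (hp : 0 ≤ p) (hbad : ∀ c, Φ.badProb P c ≤ ENNReal.ofReal p) {x μ : ℝ} (hpx : p ≤ x)
    {c : C} (hsum : ∀ n, ∑ T ∈ Φ.witnessesUpTo c n, x ^ T.card ≤ μ) (M : ℕ) :
    Q (Φ.longWitnessEvent c M) ≤ ENNReal.ofReal ((p / x) ^ M * μ) := by
  classical
  let W n := (Φ.witnessesUpTo c n).filter (M ≤ ·.card)
  have hunion : Φ.longWitnessEvent c M = ⋃ n, ⋃ T ∈ W n, Φ.Occurs T := by
    ext t
    simp only [longWitnessEvent, Set.mem_iUnion, Finset.mem_filter, W,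
      mem_witnessesUpTo, exists_prop]
    exact ⟨fun ⟨T, hT, hM, ht⟩ => ⟨T.card, T, ⟨⟨hT, le_rfl⟩, hM⟩, ht⟩,
      fun ⟨_, T, ⟨⟨hT, _⟩, hM⟩, ht⟩ => ⟨T, hT, hM, ht⟩⟩
  have hmono : Monotone fun n => ⋃ T ∈ W n, Φ.Occurs T := fun m n hmn =>
    Set.biUnion_subset_biUnion_left <| Finset.coe_subset.2 <|
      Finset.filter_subset_filter _ (witnessesUpTo_mono hmn)
  rw [hunion, hmono.measure_iUnion]
  refine iSup_le fun n => ?_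
  calc Q (⋃ T ∈ W n, Φ.Occurs T) ≤ ∑ T ∈ W n, Q (Φ.Occurs T) := measure_biUnion_finset_le _ _
    _ ≤ ∑ T ∈ W n, ENNReal.ofReal (p ^ T.card) := by
        refine Finset.sum_le_sum fun T hT => ?_
        have hT := (mem_witnessesUpTo.1 (Finset.mem_filter.1 hT).1).1
        rw [hT.measure_occurs hQ hmeas, ENNReal.ofReal_pow hp]
        exact Finset.prod_le_pow_card _ _ _ fun y _ => hbad y.2
    _ = ENNReal.ofReal (∑ T ∈ W n, p ^ T.card) :=
        (ENNReal.ofReal_sum_of_nonneg fun _ _ => pow_nonneg hp _).symm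
    _ ≤ ENNReal.ofReal ((p / x) ^ M * μ) := ENNReal.ofReal_le_ofReal <|
        (Finset.sum_filter_pow_le_div_pow_mul_sum_pow _ _ hp hpx M).trans <|
          mul_le_mul_of_nonneg_left (hsum n) (pow_nonneg (div_nonneg hp (hp.trans hpx)) M)

theorem tendsto_measure_longWitnessEvent (hQ : IsProductOf Q P)
    (hmeas : ∀ c, MeasurableSet (Φ.Bad c)) (hp : 0 ≤ p)
    (hbad : ∀ c, Φ.badProb P c ≤ ENNReal.ofReal p) {d : ℕ}
    (hdeg : ∀ c, Φ.depGraph.degree c ≤ d) (hcrit : Real.exp 1 * p * (d + 1) < 1) (c : C) :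
    Filter.Tendsto (fun M => Q (Φ.longWitnessEvent c M)) Filter.atTop (nhds 0) := by
  set x := 1 / (Real.exp 1 * (d + 1)) with hxdef
  set μ := ((d : ℝ) + 1)⁻¹ with hμdef
  have hx : 0 < x := by positivity
  have hpx : p < x := by
    rw [hxdef, lt_div_iff₀ (by positivity)]
    linarith
  have hxμ : x * (1 + μ) ^ (d + 1) ≤ μ := calc
    x * (1 + μ) ^ (d + 1) ≤ x * Real.exp 1 := by
      gcongr
      simpa [μ] using Real.one_add_inv_pow_le_exp (n := d + 1)
    _ = μ := by
      rw [hxdef, hμdef]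
      field_simp
  have hsum := sum_witnessesUpTo_le hdeg hx.le (by positivity) hxμ
  have hlim : Filter.Tendsto (fun M : ℕ => (p / x) ^ M * μ) Filter.atTop (nhds 0) := by
    simpa using (tendsto_pow_atTop_nhds_zero_of_lt_one (div_nonneg hp hx.le)
      ((div_lt_one hx).2 hpx)).mul_const μ
  refine tendsto_of_tendsto_of_tendsto_of_le_of_le tendsto_const_nhds
    (by simpa using ENNReal.tendsto_ofReal hlim) (fun _ => zero_le)
    fun M => measure_longWitnessEvent_le hQ hmeas hp hbad hpx.le (hsum · c) M

end LongWitnesses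

section Levels

variable {V Λ C : Type*} {Φ : CSP V Λ C} {I : ℕ → Set C}

lemma MTlev_mono (u : V) : Monotone fun n => MTlev Φ I n u :=
  monotone_nat_of_le_succ fun _ => Nat.le_add_right _ _

lemma exists_lt_MTlev_of_not_stabilizesAt {v : V} (h : ¬ StabilizesAt Φ I v) (N : ℕ) :
    ∃ n, N < MTlev Φ I n v := by
  induction N with
  | zero =>
    by_contra! h0
    exact h ⟨0, fun n _ => (Nat.le_zero.1 (h0 n) : MTlev Φ I n v = MTlev Φ I 0 v)⟩
  | succ N ih =>
    obtain ⟨n, hn⟩ := ih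
    by_contra! hle
    refine h ⟨n, fun m hm => le_antisymm ?_ (MTlev_mono v hm)⟩
    have := hle m
    omega

lemma exists_resample_of_lt_MTlev {v : V} {N : ℕ} : ∀ {n}, N < MTlev Φ I n v →
    ∃ m, N < MTlev Φ I (m + 1) v ∧ ∃ c ∈ I m, v ∈ Φ.dom c
  | 0, h => absurd h (Nat.not_lt_zero N)
  | n + 1, h => by
    by_cases hn : N < MTlev Φ I n v
    · exact exists_resample_of_lt_MTlev hn
    by_cases hres : ∃ c ∈ I n, v ∈ Φ.dom c
    · exact ⟨n, h, hres⟩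
    · simp [MTlev, hres] at h
      omega

lemma MTlev_eq_encard (hI : ∀ n, IsIndep Φ.depGraph (I n)) (u : V) : ∀ n,
    (MTlev Φ I n u : ℕ∞) = {q : ℕ × C | q.1 < n ∧ q.2 ∈ I q.1 ∧ u ∈ Φ.dom q.2}.encard
  | 0 => by simp [MTlev]
  | n + 1 => by
    have hsplit : {q : ℕ × C | q.1 < n + 1 ∧ q.2 ∈ I q.1 ∧ u ∈ Φ.dom q.2} =
        {q : ℕ × C | q.1 < n ∧ q.2 ∈ I q.1 ∧ u ∈ Φ.dom q.2} ∪
          {q : ℕ × C | q.1 = n ∧ q.2 ∈ I q.1 ∧ u ∈ Φ.dom q.2} := by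
      ext q
      simp only [Set.mem_union, Set.mem_ofPred_eq, Nat.lt_add_one_iff_lt_or_eq, or_and_right]
    rw [hsplit, Set.encard_union_eq, ← MTlev_eq_encard hI u n, MTlev, Nat.cast_add]
    · congr 1
      split_ifs with hres
      · obtain ⟨c, hc, hu⟩ := hres
        rw [Nat.cast_one, eq_comm, Set.encard_eq_one]
        refine ⟨(n, c), Set.eq_singleton_iff_unique_mem.2 ⟨⟨rfl, hc, hu⟩, ?_⟩⟩
        rintro q ⟨hq, hc', hu'⟩
        exact Prod.ext hq ((hI n).eq_of_mem_dom (hq ▸ hc') hc hu' hu)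
      · rw [Nat.cast_zero, eq_comm, Set.encard_eq_zero]
        exact Set.eq_empty_of_forall_notMem fun q hq => hres ⟨q.2, hq.1 ▸ hq.2.1, hq.2.2⟩
    · exact Set.disjoint_left.2 fun q h h' => (h.1.trans_eq h'.1.symm).false

end Levels

section Chains

variable {V Λ C : Type*} {Φ : CSP V Λ C} {I : ℕ → Set C}

variable (Φ I) in
/-- `DepChain Φ I r q ℓ`: the resampling `q = (time, constraint)` leads to the resampling `r`
through `ℓ` resamplings, each later than the previous one and in its closed neighbourhood. -/
inductive DepChain (r : ℕ × C) : ℕ × C → ℕ → Prop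
  | refl : r.2 ∈ I r.1 → DepChain r r 0
  | cons {q q' : ℕ × C} {ℓ : ℕ} : q.2 ∈ I q.1 → q.1 < q'.1 →
      q'.2 ∈ closedNbhd Φ.depGraph q.2 → DepChain r q' ℓ → DepChain r q (ℓ + 1)

variable (Φ I) in
open Classical in
noncomputable def chainDepth (r q : ℕ × C) : ℕ :=
  Nat.findGreatest (DepChain Φ I r q) (r.1 - q.1)

variable (Φ I) in
def influencers (r : ℕ × C) : Set (ℕ × C) := {q | ∃ ℓ, DepChain Φ I r q ℓ}

variable {r q q' : ℕ × C} {ℓ : ℕ}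

namespace DepChain

lemma mem (h : DepChain Φ I r q ℓ) : q.2 ∈ I q.1 := by
  cases h with
  | refl hr => exact hr
  | cons hq _ _ _ => exact hq

lemma fst_add_le (h : DepChain Φ I r q ℓ) : q.1 + ℓ ≤ r.1 := by
  induction h with
  | refl => simp
  | cons _ hlt _ _ ih => omega

lemma mem_gball (h : DepChain Φ I r q ℓ) : q.2 ∈ gball Φ.depGraph r.2 ℓ := by
  induction h with
  | refl => exact Set.mem_singleton _
  | cons _ _ hadj _ ih => exact mem_gball_succ _ ih ((mem_closedNbhd_comm _).1 hadj)

lemma le_chainDepth (h : DepChain Φ I r q ℓ) : ℓ ≤ chainDepth Φ I r q := by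
  classical
  exact Nat.le_findGreatest (by have := h.fst_add_le; omega) h

lemma chainDepth_spec (h : DepChain Φ I r q ℓ) : DepChain Φ I r q (chainDepth Φ I r q) := by
  classical
  exact Nat.findGreatest_spec (P := DepChain Φ I r q) (by have := h.fst_add_le; omega) h

end DepChain

lemma chainDepth_self : chainDepth Φ I r r = 0 := by
  simp [chainDepth]

lemma chainDepth_lt (h' : q' ∈ influencers Φ I r) (hq : q.2 ∈ I q.1) (hlt : q.1 < q'.1)
    (hadj : q'.2 ∈ closedNbhd Φ.depGraph q.2) :
    q ∈ influencers Φ I r ∧ chainDepth Φ I r q' < chainDepth Φ I r q := by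
  obtain ⟨_, h'⟩ := h'
  have h := DepChain.cons hq hlt hadj h'.chainDepth_spec
  exact ⟨⟨_, h⟩, h.le_chainDepth⟩

lemma eq_of_chainDepth_eq_zero (h : q ∈ influencers Φ I r) (h0 : chainDepth Φ I r q = 0) :
    q = r := by
  obtain ⟨_, h⟩ := h
  have h := h.chainDepth_spec
  rw [h0] at h
  cases h
  rfl

lemma exists_parent_of_chainDepth_eq_succ {e : ℕ} (h : q ∈ influencers Φ I r)
    (he : chainDepth Φ I r q = e + 1) :
    ∃ q' ∈ influencers Φ I r, chainDepth Φ I r q' = e ∧ q.2 ∈ closedNbhd Φ.depGraph q'.2 := by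
  obtain ⟨_, h⟩ := h
  have h := h.chainDepth_spec
  rw [he] at h
  cases h with
  | cons hq hlt hadj h' =>
    have := (chainDepth_lt ⟨_, h'⟩ hq hlt hadj).2
    exact ⟨_, ⟨_, h'⟩, le_antisymm (by omega) h'.le_chainDepth, (mem_closedNbhd_comm _).1 hadj⟩

lemma influencers_finite [Φ.depGraph.LocallyFinite] (r : ℕ × C) :
    (influencers Φ I r).Finite :=
  ((Set.finite_Iic r.1).prod (gball_finite_of_locallyFinite Φ.depGraph r.2 r.1)).subset
    fun _ ⟨_, h⟩ =>
    ⟨by have := h.fst_add_le; simp only [Set.mem_Iic]; omega,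
      gball_mono _ _ (by have := h.fst_add_le; omega) h.mem_gball⟩

end Chains

section Influencers

variable {V Λ C : Type*} {Φ : CSP V Λ C} {I : ℕ → Set C} {r q q' : ℕ × C}

section Independent

variable (hI : ∀ n, IsIndep Φ.depGraph (I n))
include hI

lemma mem_influencers_of_mem_dom (h' : q' ∈ influencers Φ I r) (hq : q.2 ∈ I q.1)
    (hle : q.1 ≤ q'.1) {u : V} (hu : u ∈ Φ.dom q.2) (hu' : u ∈ Φ.dom q'.2) :
    q ∈ influencers Φ I r := by
  rcases hle.lt_or_eq with hlt | heq
  · exact (chainDepth_lt h' hq hlt (Φ.mem_closedNbhd_of_mem_dom hu hu')).1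
  · rwa [Prod.ext heq ((hI q.1).eq_of_mem_dom hq (heq ▸ h'.choose_spec.mem) hu hu')]

lemma chainDepth_lt_chainDepth_iff (h : q ∈ influencers Φ I r) (h' : q' ∈ influencers Φ I r)
    {u : V} (hu : u ∈ Φ.dom q.2) (hu' : u ∈ Φ.dom q'.2) :
    chainDepth Φ I r q < chainDepth Φ I r q' ↔ q'.1 < q.1 := by
  obtain ⟨_, hc⟩ := h
  obtain ⟨_, hc'⟩ := h'
  rcases lt_trichotomy q.1 q'.1 with hlt | heq | hlt
  · have := (chainDepth_lt ⟨_, hc'⟩ hc.mem hlt (Φ.mem_closedNbhd_of_mem_dom hu hu')).2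
    exact ⟨fun h => by omega, fun h => by omega⟩
  · rw [Prod.ext heq ((hI q.1).eq_of_mem_dom hc.mem (heq ▸ hc'.mem) hu hu')]
    simp
  · have := (chainDepth_lt ⟨_, hc⟩ hc'.mem hlt (Φ.mem_closedNbhd_of_mem_dom hu' hu)).2
    exact ⟨fun _ => hlt, fun _ => this⟩

end Independent

lemma injOn_chainDepth_snd :
    Set.InjOn (fun q => (chainDepth Φ I r q, q.2)) (influencers Φ I r) := by
  intro q h q' h' heq
  obtain ⟨hd, hc⟩ := Prod.ext_iff.1 heq
  dsimp only at hd hc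
  rcases lt_trichotomy q.1 q'.1 with hlt | heq | hlt
  · have := chainDepth_lt h' (h.choose_spec.mem) hlt (hc ▸ self_mem_closedNbhd _ _)
    omega
  · exact Prod.ext heq hc
  · have := chainDepth_lt h (h'.choose_spec.mem) hlt (hc ▸ self_mem_closedNbhd _ _)
    omega

variable [Φ.depGraph.LocallyFinite]

variable (Φ I) in
open Classical in
noncomputable def witnessOf (r : ℕ × C) : Finset (ℕ × C) :=
  (influencers_finite (Φ := Φ) (I := I) r).toFinset.image fun q => (chainDepth Φ I r q, q.2)

lemma coe_witnessOf : (witnessOf Φ I r : Set (ℕ × C)) =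
    (fun q => (chainDepth Φ I r q, q.2)) '' influencers Φ I r := by
  classical
  simp [witnessOf]

lemma mem_witnessOf {y : ℕ × C} :
    y ∈ witnessOf Φ I r ↔ ∃ q ∈ influencers Φ I r, (chainDepth Φ I r q, q.2) = y := by
  rw [← Finset.mem_coe, coe_witnessOf, Set.mem_image]

variable (hI : ∀ n, IsIndep Φ.depGraph (I n))
include hI

lemma isWitness_witnessOf (hr : r.2 ∈ I r.1) : Φ.IsWitness r.2 (witnessOf Φ I r) where
  root_mem := mem_witnessOf.2 ⟨r, ⟨0, .refl hr⟩, by rw [chainDepth_self]⟩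
  eq_of_mem_zero h := by
    obtain ⟨q, hq, heq⟩ := mem_witnessOf.1 h
    obtain ⟨h0, rfl⟩ := Prod.ext_iff.1 heq
    rw [eq_of_chainDepth_eq_zero hq h0]
  exists_parent h := by
    obtain ⟨q, hq, heq⟩ := mem_witnessOf.1 h
    obtain ⟨he, rfl⟩ := Prod.ext_iff.1 heq
    obtain ⟨q', hq', he', hadj⟩ := exists_parent_of_chainDepth_eq_succ hq he
    exact ⟨q'.2, mem_witnessOf.2 ⟨q', hq', by rw [he']⟩, hadj⟩
  not_adj h h' hadj := by
    obtain ⟨q, hq, heq⟩ := mem_witnessOf.1 h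
    obtain ⟨q', hq', heq'⟩ := mem_witnessOf.1 h'
    obtain ⟨hd, rfl⟩ := Prod.ext_iff.1 heq
    obtain ⟨hd', rfl⟩ := Prod.ext_iff.1 heq'
    rcases lt_trichotomy q.1 q'.1 with hlt | heq | hlt
    · have := (chainDepth_lt hq' hq.choose_spec.mem hlt (Or.inr hadj)).2
      omega
    · exact hI q.1 _ hq.choose_spec.mem _ (heq ▸ hq'.choose_spec.mem) hadj
    · have := (chainDepth_lt hq hq'.choose_spec.mem hlt (Or.inr hadj.symm)).2
      omega

/-- The deeper nodes containing `u` are exactly the earlier resamplings of `u`. -/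
lemma witnessLevel_witnessOf (hq : q ∈ influencers Φ I r) {u : V} (hu : u ∈ Φ.dom q.2) :
    Φ.witnessLevel (witnessOf Φ I r) (chainDepth Φ I r q) u = MTlev Φ I q.1 u := by
  classical
  have hset : {q' ∈ influencers Φ I r | chainDepth Φ I r q < chainDepth Φ I r q' ∧
      u ∈ Φ.dom q'.2} = {q' : ℕ × C | q'.1 < q.1 ∧ q'.2 ∈ I q'.1 ∧ u ∈ Φ.dom q'.2} := by
    ext q'
    constructor
    · rintro ⟨hq', hlt, hu'⟩
      exact ⟨(chainDepth_lt_chainDepth_iff hI hq hq' hu hu').1 hlt, hq'.choose_spec.mem, hu'⟩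
    · rintro ⟨hlt, hI', hu'⟩
      have hq' := mem_influencers_of_mem_dom hI hq hI' hlt.le hu' hu
      exact ⟨hq', (chainDepth_lt_chainDepth_iff hI hq hq' hu hu').2 hlt, hu'⟩
  rw [← Nat.cast_inj (R := ℕ∞), MTlev_eq_encard hI, ← hset, witnessLevel,
    ← Set.encard_coe_eq_coe_finsetCard, Finset.coe_filter,
    ← (injOn_chainDepth_snd.mono (Set.sep_subset _ _)).encard_image]
  congr 1
  ext y
  simp only [mem_witnessOf, Set.mem_image, Set.mem_ofPred_eq]
  constructor
  · rintro ⟨⟨q', hq', rfl⟩, hlt, hu'⟩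
    exact ⟨q', ⟨hq', hlt, hu'⟩, rfl⟩
  · rintro ⟨q', ⟨hq', hlt, hu'⟩, rfl⟩
    exact ⟨⟨q', hq', rfl⟩, hlt, hu'⟩

end Influencers

section WitnessOfRun

variable {V Λ C : Type*} {Φ : CSP V Λ C} {I : ℕ → Set C} {r : ℕ × C}
  [Φ.depGraph.LocallyFinite]

lemma MTlev_le_card_witnessOf (hI : ∀ n, IsIndep Φ.depGraph (I n)) (hr : r.2 ∈ I r.1) {v : V}
    (hv : v ∈ Φ.dom r.2) : MTlev Φ I (r.1 + 1) v ≤ (witnessOf Φ I r).card := by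
  rw [← Nat.cast_le (α := ℕ∞), MTlev_eq_encard hI, ← Set.encard_coe_eq_coe_finsetCard,
    coe_witnessOf, injOn_chainDepth_snd.encard_image]
  exact Set.encard_le_encard fun q ⟨hlt, hq, hvq⟩ =>
    mem_influencers_of_mem_dom hI ⟨0, .refl hr⟩ hq (Nat.lt_succ_iff.1 hlt) hvq hv

lemma mem_occurs_witnessOf {t : (V × ℕ) → Λ} (hcons : Φ.Consistent (fun v n => t (v, n)) I) :
    t ∈ Φ.Occurs (witnessOf Φ I r) := by
  intro y hy
  obtain ⟨q, hq, rfl⟩ := mem_witnessOf.1 hy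
  refine (Φ.violates_congr fun u hu => ?_).1 (hcons.2 q.1 q.2 hq.choose_spec.mem)
  simp [MTstep, witnessLevel_witnessOf hcons.1 hq hu]

theorem exists_longWitnessEvent_of_not_stabilizesAt {t : (V × ℕ) → Λ}
    (hcons : Φ.Consistent (fun v n => t (v, n)) I) {v : V} (h : ¬ StabilizesAt Φ I v)
    (N : ℕ) : ∃ c, v ∈ Φ.dom c ∧ t ∈ Φ.longWitnessEvent c N := by
  obtain ⟨n, hn⟩ := exists_lt_MTlev_of_not_stabilizesAt h N
  obtain ⟨m, hm, c, hc, hv⟩ := exists_resample_of_lt_MTlev hn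
  exact ⟨c, hv, witnessOf Φ I (m, c), isWitness_witnessOf (r := (m, c)) hcons.1 hc,
    hm.le.trans (MTlev_le_card_witnessOf (r := (m, c)) hcons.1 hc hv), mem_occurs_witnessOf hcons⟩

variable (Φ) in
lemma finite_setOf_mem_dom (v : V) : {c | v ∈ Φ.dom c}.Finite := by
  rcases Set.eq_empty_or_nonempty {c | v ∈ Φ.dom c} with h | ⟨c₀, hc₀⟩
  · exact h ▸ Set.finite_empty
  · exact (closedNbhd_finite _ c₀).subset fun c hc => Φ.mem_closedNbhd_of_mem_dom hc₀ hc

end WitnessOfRun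

end CSP

theorem moser_tardos_general
    {V Λ C : Type*} [MeasurableSpace Λ]
    (Φ : CSP V Λ C) (P : Measure Λ) [IsProbabilityMeasure P]
    (p : ℝ) (d : ℕ) (hp0 : 0 ≤ p)
    (hmeas : ∀ c, MeasurableSet (Φ.Bad c))
    (hbad : ∀ c, Φ.badProb P c ≤ ENNReal.ofReal p)
    (hdeg : ∀ c, (Φ.depGraph.neighborSet c).encard ≤ d)
    (hcrit : Real.exp 1 * p * (d + 1) < 1)
    (Q : Measure ((V × ℕ) → Λ)) (hQ : IsProductOf Q P)
    (v : V) :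
    Q {t : (V × ℕ) → Λ |
        ∀ I : ℕ → Set C, Φ.Consistent (fun v n => t (v, n)) I → StabilizesAt Φ I v} = 1 := by
  have : IsProbabilityMeasure Q := hQ.eq_infinitePi ▸ inferInstance
  let _ : Φ.depGraph.LocallyFinite := fun c => (Set.finite_of_encard_le_coe (hdeg c)).fintype
  have hdeg' : ∀ c, Φ.depGraph.degree c ≤ d := fun c => by
    have := hdeg c
    rwa [Set.encard_eq_coe_toFinset_card, Nat.cast_le] at this
  set S := {t : (V × ℕ) → Λ |
    ∀ I : ℕ → Set C, Φ.Consistent (fun v n => t (v, n)) I → StabilizesAt Φ I v}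
  set F := (Φ.finite_setOf_mem_dom v).toFinset
  have hsub : ∀ M, Sᶜ ⊆ ⋃ c ∈ F, Φ.longWitnessEvent c M := fun M t ht => by
    simp only [S, Set.mem_compl_iff, Set.mem_ofPred_eq, not_forall] at ht
    obtain ⟨I, hcons, hns⟩ := ht
    obtain ⟨c, hv, hc⟩ := CSP.exists_longWitnessEvent_of_not_stabilizesAt hcons hns M
    exact Set.mem_biUnion ((Set.Finite.mem_toFinset _).2 hv) hc
  have hlim := tendsto_finsetSum F fun c _ =>
    CSP.tendsto_measure_longWitnessEvent hQ hmeas hp0 hbad hdeg' hcrit c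
  rw [Finset.sum_const_zero] at hlim
  have hnull : Q Sᶜ = 0 := le_antisymm (ge_of_tendsto' hlim fun M =>
    (measure_mono (hsub M)).trans (measure_biUnion_finset_le F _)) zero_le
  refine le_antisymm prob_le_one ?_
  simpa [hnull] using measure_univ_le_add_compl (μ := Q) S

/-- **Theorem (Moser–Tardos).** Under the LLL assumptions, for a random table `t` sampled from
the product space `(Λ^{V×ℕ}, P^{V×ℕ})`, for each `v ∈ V` the probability that every labeling
produced by the Moser–Tardos algorithm on `(Φ, t)` is defined at `v` equals `1`. -/
theorem moser_tardos
    {V Λ C : Type*} [MeasurableSpace Λ] [StandardBorelSpace Λ]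
    (Φ : CSP V Λ C) (P : Measure Λ) [IsProbabilityMeasure P]
    (p : ℝ) (d : ℕ) (hp0 : 0 ≤ p) (hp1 : p < 1)
    (hmeas : ∀ c, MeasurableSet (Φ.Bad c))
    (hbad : ∀ c, Φ.badProb P c ≤ ENNReal.ofReal p)
    (hdeg : ∀ c, (Φ.depGraph.neighborSet c).encard ≤ d)
    (hcrit : Real.exp 1 * p * (d + 1) < 1)
    (Q : Measure ((V × ℕ) → Λ)) (hQ : IsProductOf Q P)
    (v : V) :
    Q {t : (V × ℕ) → Λ |
        ∀ I : ℕ → Set C, Φ.Consistent (fun v n => t (v, n)) I → StabilizesAt Φ I v} = 1 :=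
  moser_tardos_general Φ P p d hp0 hmeas hbad hdeg hcrit Q hQ v
end
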